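/- arXiv:1205.0348 — 6 statements merged into one kernel-verified Lean document; each statement's English description precedes it below -/
import Mathlib

section
/- Let U ⊆ ℝⁿ be open, let g : U → {real symmetric positive definite n×n matrices} be smooth (a Riemannian metric on U), let f : U → ℝ be smooth, and let p ∈ U with Df(p) ≠ 0. Then there exist an open neighborhood V of 0 in ℝⁿ and a smooth map ψ : V → U such that: ψ(0) = p; ψ is a diffeomorphism onto an open neighborhood of p in U; the vectors ∂₁ψ(0), …, ∂ₙψ(0) are orthonormal with respect to the inner product defined by g(p), i.e. (∂ᵢψ(0))ᵀ g(p) (∂ⱼψ(0)) = δᵢⱼ for all i, j; and all second-order partial derivatives of f ∘ ψ vanish identically on V. -/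
/-!
Since `∂ᵢ f (p) ≠ 0` for some `i`, replacing the `i`-th coordinate by `f` gives a map `φ` with
invertible derivative `T` at `p`, in whose coordinates `f` is a coordinate function. Let `B` be a
matrix whose columns are `g(p)`-orthonormal (`B = g(p)^{-1/2}`) and `A = T ∘ B`. The inverse
function theorem inverts the chart `χ = A⁻¹ ∘ (φ - φ p)` near `p`; its inverse `ψ` has
`Dψ(0) = (Dχ(p))⁻¹ = B`, and `f ∘ ψ = f p + (A ·)ᵢ` is affine, so its second derivatives vanish.
-/

open Set

section LocalInverse

variable {𝕂 E F : Type*} [RCLike 𝕂] [NormedAddCommGroup E] [NormedSpace 𝕂 E] [CompleteSpace E]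
  [NormedAddCommGroup F] [NormedSpace 𝕂 F]

/-- Shrinking the chart of the inverse function theorem to the open set where the derivative stays
invertible makes its inverse `C^n` on the whole target. -/
theorem exists_openPartialHomeomorph_contDiffOn_symm {φ : E → F} {U : Set E} {n : WithTop ℕ∞}
    (hU : IsOpen U) (hφ : ContDiffOn 𝕂 n φ U) (hn : 1 ≤ n) {p : E} (hp : p ∈ U)
    {T : E ≃L[𝕂] F} (hT : HasFDerivAt φ (T : E →L[𝕂] F) p) :
    ∃ e : OpenPartialHomeomorph E F, ⇑e = φ ∧ p ∈ e.source ∧ e.source ⊆ U ∧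
      ContDiffOn 𝕂 n e.symm e.target := by
  have hn₀ : n ≠ 0 := (zero_lt_one.trans_le hn).ne'
  set s := U ∩ fderiv 𝕂 φ ⁻¹' range ((↑) : (E ≃L[𝕂] F) → E →L[𝕂] F)
  have hs : IsOpen s :=
    (hφ.continuousOn_fderiv_of_isOpen hU hn).isOpen_inter_preimage hU ContinuousLinearEquiv.isOpen
  let e := ((hφ.contDiffAt (hU.mem_nhds hp)).toOpenPartialHomeomorph φ hT hn₀).restrOpen s hs
  refine ⟨e, rfl, ⟨ContDiffAt.mem_toOpenPartialHomeomorph_source _ _ _, hp, T, hT.fderiv.symm⟩,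
    fun x hx => hx.2.1, fun a ha => ContDiffAt.contDiffWithinAt ?_⟩
  obtain ⟨-, hxU, T', hT'⟩ := e.map_target ha
  have hφx := hφ.contDiffAt (hU.mem_nhds hxU)
  refine e.contDiffAt_symm ha (f₀' := T') ?_ hφx
  rw [hT']
  exact (hφx.differentiableAt hn₀).hasFDerivAt

end LocalInverse

theorem fderiv_fderiv_apply_eq_zero_of_eqOn_affine {𝕜 E G : Type*} [NontriviallyNormedField 𝕜]
    [NormedAddCommGroup E] [NormedSpace 𝕜 E] [NormedAddCommGroup G] [NormedSpace 𝕜 G]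
    {F : E → G} {V : Set E} (hV : IsOpen V) (c : G) (L : E →L[𝕜] G)
    (hF : EqOn F (fun y => c + L y) V) {x : E} (hx : x ∈ V) (v : E) :
    fderiv 𝕜 (fun y => fderiv 𝕜 F y v) x = 0 := by
  have hconst : (fun y => fderiv 𝕜 F y v) =ᶠ[nhds x] fun _ => L v := by
    filter_upwards [hV.mem_nhds hx] with y hy
    rw [(hF.eventuallyEq_of_mem (hV.mem_nhds hy)).fderiv_eq, fderiv_const_add, L.fderiv]
  rw [hconst.fderiv_eq, fderiv_fun_const, Pi.zero_apply]

section UpdateCoord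

variable {𝕜 ι : Type*} [NontriviallyNormedField 𝕜] [DecidableEq ι]

theorem ContinuousLinearMap.exists_apply_single_ne_zero [Fintype ι] {ℓ : (ι → 𝕜) →L[𝕜] 𝕜}
    (hℓ : ℓ ≠ 0) :
    ∃ i, ℓ (Pi.single i 1) ≠ 0 := by
  by_contra! h
  exact hℓ (ContinuousLinearMap.coe_injective ((Pi.basisFun 𝕜 ι).ext fun i => by simpa using h i))

namespace ContinuousLinearMap

def updateCoord (i : ι) (ℓ : (ι → 𝕜) →L[𝕜] 𝕜) : (ι → 𝕜) →L[𝕜] (ι → 𝕜) :=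
  pi (Function.update (fun k => proj k) i ℓ)

@[simp]
theorem updateCoord_apply (i : ι) (ℓ : (ι → 𝕜) →L[𝕜] 𝕜) (v : ι → 𝕜) :
    updateCoord i ℓ v = Function.update v i (ℓ v) := by
  ext k
  rcases eq_or_ne k i with rfl | hk <;> simp [updateCoord, *]

theorem injective_updateCoord [Fintype ι] {i : ι} {ℓ : (ι → 𝕜) →L[𝕜] 𝕜}
    (hℓ : ℓ (Pi.single i 1) ≠ 0) :
    Function.Injective (updateCoord i ℓ) := by
  rw [← coe_coe, ← LinearMap.ker_eq_bot, LinearMap.ker_eq_bot']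
  intro v hv
  have hv' : Function.update v i (ℓ v) = 0 := by simpa using hv
  have hsingle : v = v i • Pi.single i 1 := by
    ext k
    rcases eq_or_ne k i with rfl | hk
    · simp
    · simpa [hk] using congrFun hv' k
  have : v i * ℓ (Pi.single i 1) = 0 := by
    simpa [← smul_eq_mul, ← map_smul, ← hsingle] using congrFun hv' i
  rw [hsingle, (mul_eq_zero.1 this).resolve_right hℓ, zero_smul]

theorem exists_continuousLinearEquiv_coe_eq_updateCoord [Fintype ι] [CompleteSpace 𝕜] {i : ι}
    {ℓ : (ι → 𝕜) →L[𝕜] 𝕜} (hℓ : ℓ (Pi.single i 1) ≠ 0) :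
    ∃ T : (ι → 𝕜) ≃L[𝕜] (ι → 𝕜), (T : (ι → 𝕜) →L[𝕜] (ι → 𝕜)) = updateCoord i ℓ :=
  ⟨(LinearEquiv.ofInjectiveEndo _ (injective_updateCoord hℓ)).toContinuousLinearEquiv, rfl⟩

end ContinuousLinearMap

open ContinuousLinearMap

variable [Fintype ι]

theorem HasFDerivAt.update_self {f : (ι → 𝕜) → 𝕜} {ℓ : (ι → 𝕜) →L[𝕜] 𝕜} {x : ι → 𝕜}
    (hf : HasFDerivAt f ℓ x) (i : ι) :
    HasFDerivAt (fun y => Function.update y i (f y)) (updateCoord i ℓ) x := by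
  refine hasFDerivAt_pi.2 fun k => ?_
  rcases eq_or_ne k i with rfl | hk
  · simpa using hf
  · simpa [hk] using hasFDerivAt_apply k x

theorem ContDiffOn.update_self {f : (ι → 𝕜) → 𝕜} {U : Set (ι → 𝕜)} {n : WithTop ℕ∞}
    (hf : ContDiffOn 𝕜 n f U) (i : ι) :
    ContDiffOn 𝕜 n (fun y => Function.update y i (f y)) U := by
  refine contDiffOn_pi.2 fun k => ?_
  rcases eq_or_ne k i with rfl | hk
  · simpa using hf
  · simpa [hk] using (contDiff_apply 𝕜 𝕜 k).contDiffOn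

end UpdateCoord

namespace Matrix

open scoped MatrixOrder ComplexOrder in
theorem PosDef.exists_isUnit_conjTranspose_mul_mul_eq_one {𝕜 ι : Type*} [RCLike 𝕜]
    [Fintype ι] [DecidableEq ι] {G : Matrix ι ι 𝕜} (hG : G.PosDef) :
    ∃ M : Matrix ι ι 𝕜, IsUnit M ∧ Mᴴ * G * M = 1 := by
  set S := CFC.sqrt G
  have hS : IsUnit S.det :=
    (isUnit_iff_isUnit_det S).1 ((CFC.isUnit_sqrt_iff G hG.posSemidef.nonneg).2 hG.isUnit)
  have hSS : S * S = G := CFC.sqrt_mul_sqrt_self G hG.posSemidef.nonneg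
  have hSh : S⁻¹ᴴ = S⁻¹ := (nonneg_iff_posSemidef.1 (CFC.sqrt_nonneg G)).1.inv
  refine ⟨S⁻¹, (isUnit_iff_isUnit_det _).2 (isUnit_nonsing_inv_det S hS), ?_⟩
  rw [hSh, ← hSS, ← Matrix.mul_assoc, nonsing_inv_mul S hS, Matrix.one_mul, mul_nonsing_inv S hS]

theorem sum_sum_mulVec_single_mul_mul_mulVec_single {R ι : Type*} [CommSemiring R]
    [Fintype ι] [DecidableEq ι] (M G : Matrix ι ι R) (i j : ι) :
    ∑ k, ∑ l, (M *ᵥ Pi.single i 1) k * G k l * (M *ᵥ Pi.single j 1) l = (Mᵀ * G * M) i j := by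
  simp only [mulVec_single_one, mul_apply, transpose_apply, Finset.sum_mul, col_apply]
  rw [Finset.sum_comm]

theorem PosDef.exists_continuousLinearEquiv_gram_eq_one {ι : Type*} [Fintype ι]
    [DecidableEq ι] {G : Matrix ι ι ℝ} (hG : G.PosDef) :
    ∃ B : (ι → ℝ) ≃L[ℝ] (ι → ℝ), ∀ i j,
      ∑ k, ∑ l, B (Pi.single i 1) k * G k l * B (Pi.single j 1) l = if i = j then 1 else 0 := by
  obtain ⟨M, hM, hMGM⟩ := hG.exists_isUnit_conjTranspose_mul_mul_eq_one
  refine ⟨(LinearEquiv.ofInjectiveEndo (toLin' M)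
    (mulVec_injective_iff_isUnit.2 hM)).toContinuousLinearEquiv, fun i j => ?_⟩
  rw [← one_apply, ← hMGM, conjTranspose_eq_transpose_of_trivial,
    ← sum_sum_mulVec_single_mul_mul_mulVec_single]
  rfl

end Matrix

theorem statement2_general (n : ℕ) (U : Set (Fin n → ℝ)) (hU : IsOpen U)
    (g : (Fin n → ℝ) → Matrix (Fin n) (Fin n) ℝ)
    (hgpos : ∀ x ∈ U, (g x).PosDef)
    (f : (Fin n → ℝ) → ℝ) (hf : ContDiffOn ℝ (⊤ : ℕ∞) f U)
    (p : Fin n → ℝ) (hp : p ∈ U) (hdf : fderiv ℝ f p ≠ 0) :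
    ∃ V : Set (Fin n → ℝ), IsOpen V ∧ (0 : Fin n → ℝ) ∈ V ∧
      ∃ ψ : (Fin n → ℝ) → (Fin n → ℝ),
        ψ 0 = p ∧
        ContDiffOn ℝ (⊤ : ℕ∞) ψ V ∧
        ψ '' V ⊆ U ∧ IsOpen (ψ '' V) ∧ Set.InjOn ψ V ∧
        (∃ ψinv : (Fin n → ℝ) → (Fin n → ℝ),
          ContDiffOn ℝ (⊤ : ℕ∞) ψinv (ψ '' V) ∧ ∀ x ∈ V, ψinv (ψ x) = x) ∧
        (∀ i j : Fin n,
          (∑ k : Fin n, ∑ l : Fin n,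
            fderiv ℝ ψ 0 (Pi.single i 1) k * g p k l * fderiv ℝ ψ 0 (Pi.single j 1) l)
            = if i = j then 1 else 0) ∧
        (∀ i j : Fin n, ∀ x ∈ V,
          fderiv ℝ (fun y => fderiv ℝ (f ∘ ψ) y (Pi.single i 1)) x (Pi.single j 1) = 0) := by
  obtain ⟨i₀, hi₀⟩ := ContinuousLinearMap.exists_apply_single_ne_zero hdf
  obtain ⟨T, hT⟩ := ContinuousLinearMap.exists_continuousLinearEquiv_coe_eq_updateCoord hi₀
  obtain ⟨B, hB⟩ := (hgpos p hp).exists_continuousLinearEquiv_gram_eq_one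
  set φ := fun y => Function.update y i₀ (f y)
  set A := B.trans T
  have hφp : HasFDerivAt φ (T : (Fin n → ℝ) →L[ℝ] (Fin n → ℝ)) p :=
    hT ▸ ((hf.differentiableOn (by simp) p hp).differentiableAt
      (hU.mem_nhds hp)).hasFDerivAt.update_self i₀
  have hχ : ContDiffOn ℝ (⊤ : ℕ∞) (fun y => A.symm (φ y - φ p)) U :=
    A.symm.contDiff.comp_contDiffOn ((hf.update_self i₀).sub contDiffOn_const)
  have hχp :
      HasFDerivAt (fun y => A.symm (φ y - φ p)) (B.symm : (Fin n → ℝ) →L[ℝ] (Fin n → ℝ)) p := by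
    refine (A.symm.hasFDerivAt.comp p (hφp.sub_const (φ p))).congr_fderiv ?_
    ext v
    simp [A]
  obtain ⟨e, he, hpe, heU, he_symm⟩ :=
    exists_openPartialHomeomorph_contDiffOn_symm hU hχ (by exact_mod_cast le_top) hp hχp
  have he0 : e p = 0 := by simp [he]
  have h0 : 0 ∈ e.target := he0 ▸ e.map_source hpe
  have hψ0 : e.symm 0 = p := he0 ▸ e.left_inv hpe
  have hψ' : HasFDerivAt e.symm (B : (Fin n → ℝ) →L[ℝ] (Fin n → ℝ)) 0 := by
    simpa using e.hasFDerivAt_symm h0 (f' := B.symm) (by rwa [hψ0, he])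
  have hfψ : EqOn (f ∘ e.symm)
      (fun y => f p + ((ContinuousLinearMap.proj i₀).comp (A : (Fin n → ℝ) →L[ℝ] (Fin n → ℝ))) y)
      e.target := by
    intro y hy
    have hχy := e.right_inv hy
    rw [he] at hχy
    have hφy : φ (e.symm y) = φ p + A y := sub_eq_iff_eq_add'.1 (A.symm_apply_eq.1 hχy)
    simpa [φ] using congrFun hφy i₀
  refine ⟨e.target, e.open_target, h0, e.symm, hψ0, he_symm, ?_, ?_, e.symm.injOn,
    ⟨e, ?_, fun x hx => e.right_inv hx⟩, ?_, fun i j x hx => ?_⟩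
  · exact e.symm_image_target_eq_source ▸ heU
  · exact e.symm_image_target_eq_source ▸ e.open_source
  · rw [e.symm_image_target_eq_source, he]
    exact hχ.mono heU
  · simpa only [hψ'.fderiv, ContinuousLinearEquiv.coe_coe] using hB
  · rw [fderiv_fderiv_apply_eq_zero_of_eqOn_affine e.open_target _ _ hfψ hx]
    rfl

/-- Around a non-critical point `p` of a smooth function `f` on an open set
`U ⊆ ℝⁿ` equipped with a smooth Riemannian metric `g`, there is a smooth local
parametrization `ψ` with `ψ(0) = p`, a diffeomorphism onto an open neighborhood of `p`,
whose coordinate frame at `0` is `g(p)`-orthonormal, and in which all second-order partial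
derivatives of `f ∘ ψ` vanish identically. -/
theorem statement2 (n : ℕ) (U : Set (Fin n → ℝ)) (hU : IsOpen U)
    (g : (Fin n → ℝ) → Matrix (Fin n) (Fin n) ℝ)
    (hgsmooth : ∀ i j : Fin n, ContDiffOn ℝ (⊤ : ℕ∞) (fun x => g x i j) U)
    (hgsym : ∀ x ∈ U, (g x).IsSymm)
    (hgpos : ∀ x ∈ U, (g x).PosDef)
    (f : (Fin n → ℝ) → ℝ) (hf : ContDiffOn ℝ (⊤ : ℕ∞) f U)
    (p : Fin n → ℝ) (hp : p ∈ U) (hdf : fderiv ℝ f p ≠ 0) :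
    ∃ V : Set (Fin n → ℝ), IsOpen V ∧ (0 : Fin n → ℝ) ∈ V ∧
      ∃ ψ : (Fin n → ℝ) → (Fin n → ℝ),
        ψ 0 = p ∧
        ContDiffOn ℝ (⊤ : ℕ∞) ψ V ∧
        ψ '' V ⊆ U ∧ IsOpen (ψ '' V) ∧ Set.InjOn ψ V ∧
        (∃ ψinv : (Fin n → ℝ) → (Fin n → ℝ),
          ContDiffOn ℝ (⊤ : ℕ∞) ψinv (ψ '' V) ∧ ∀ x ∈ V, ψinv (ψ x) = x) ∧
        (∀ i j : Fin n,
          (∑ k : Fin n, ∑ l : Fin n,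
            fderiv ℝ ψ 0 (Pi.single i 1) k * g p k l * fderiv ℝ ψ 0 (Pi.single j 1) l)
            = if i = j then 1 else 0) ∧
        (∀ i j : Fin n, ∀ x ∈ V,
          fderiv ℝ (fun y => fderiv ℝ (f ∘ ψ) y (Pi.single i 1)) x (Pi.single j 1) = 0) :=
  statement2_general n U hU g hgpos f hf p hp hdf
end

section
/- Let H be an infinite-dimensional separable complex Hilbert space, D a self-adjoint densely defined operator on H, (λ_k)_{k∈ℕ} a nondecreasing sequence in [0,∞), and (e_i)_{i∈ℤ} a Hilbert basis of H with e_i ∈ dom D for all i, D e_k = √λ_k e_k for k ≥ 0, and D e_{−k} = −√λ_k e_{−k} for k ≥ 1. Let θ > 0. Then the following are equivalent: (i) liminf_{k→∞} λ_k k^{−θ} > 0; (ii) there exist C₀, C₁ > 0 such that for every integer n ≥ 1 there is a closed linear subspace Z_n ⊆ H satisfying: (a) the quotient H/Z_n is finite-dimensional of dimension at most C₀ n^{1/θ}; (b) D(dom D ∩ Z_n) ⊆ Z_n; (c) every u ∈ dom D ∩ Z_n with ‖u‖² + ‖Du‖² ≤ 1 satisfies ‖u‖ ≤ C₁ n^{−1/2}.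 -/
/-!
In the eigenbasis, `‖D u‖² = ∑ᵢ λ_{|i|} |⟪eᵢ, u⟫|²`.

(i) ⇒ (ii): choose `m ≲ n^{1/θ}` with `λ_m ≥ n` and let `Z_n` be the orthogonal complement of
`{eᵢ : |i| < m}`. It is `D`-invariant, of codimension `< 2m`, and `‖D u‖² ≥ n ‖u‖²` on it, so
`‖u‖² + ‖D u‖² ≤ 1` forces `‖u‖ ≤ n^{-1/2}`.

(ii) ⇒ (i): a subspace of codimension `≤ k` meets `span {e₀, …, e_k}` nontrivially, and there
`‖D u‖² ≤ λ_k ‖u‖²`. By homogeneity, (c) then gives `n ≤ C₁² (1 + λ_k)` whenever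
`C₀ n^{1/θ} ≤ k`; taking `n ≈ (k / C₀)^θ` yields `λ_k ≳ k^θ`.
-/

open scoped InnerProductSpace
open Filter Topology

section

variable {𝕜 E F ι : Type*} [RCLike 𝕜]

theorem LinearPMap.norm_sq_le_sq_mul_of_norm_le [NormedAddCommGroup E] [NormedSpace 𝕜 E]
    [NormedAddCommGroup F] [NormedSpace 𝕜 F] {D : E →ₗ.[𝕜] F} {Z : Submodule 𝕜 E} {r : ℝ}
    (h : ∀ u : E, ∀ hu : u ∈ D.domain, u ∈ Z → ‖u‖ ^ 2 + ‖D ⟨u, hu⟩‖ ^ 2 ≤ 1 → ‖u‖ ≤ r)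
    {u : E} (hu : u ∈ D.domain) (huZ : u ∈ Z) :
    ‖u‖ ^ 2 ≤ r ^ 2 * (‖u‖ ^ 2 + ‖D ⟨u, hu⟩‖ ^ 2) := by
  rcases eq_or_ne u 0 with rfl | hu0
  · rw [norm_zero, sq (0 : ℝ), zero_mul, zero_add]; positivity
  set S := ‖u‖ ^ 2 + ‖D ⟨u, hu⟩‖ ^ 2
  have hS : 0 < S := by have := norm_pos_iff.mpr hu0; positivity
  -- rescale `u` onto the unit sphere of the graph norm, where `h` applies
  set t := (Real.sqrt S)⁻¹
  have ht : 0 < t := by positivity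
  have htS : t ^ 2 * S = 1 := by
    rw [inv_pow, Real.sq_sqrt hS.le, inv_mul_cancel₀ hS.ne']
  have hDt : D ⟨(t : 𝕜) • u, D.domain.smul_mem _ hu⟩ = (t : 𝕜) • D ⟨u, hu⟩ :=
    D.map_smul _ ⟨u, hu⟩
  have key := h _ (D.domain.smul_mem _ hu) (Z.smul_mem _ huZ) (by
    rw [hDt, norm_smul, norm_smul, RCLike.norm_of_nonneg ht.le, mul_pow, mul_pow, ← mul_add,
      htS])
  rw [norm_smul, RCLike.norm_of_nonneg ht.le] at key
  calc ‖u‖ ^ 2 = (t * ‖u‖) ^ 2 * S := by rw [mul_pow, mul_right_comm, htS, one_mul]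
    _ ≤ r ^ 2 * S := by gcongr

section Eigenbasis

variable [NormedAddCommGroup E] [InnerProductSpace 𝕜 E]

theorem LinearPMap.IsFormalAdjoint.inner_apply_eq_of_apply_eq_smul {D : E →ₗ.[𝕜] E}
    (hD : D.IsFormalAdjoint D) {x : D.domain} {μ : ℝ} (hx : D x = (μ : 𝕜) • (x : E))
    (u : D.domain) : ⟪(x : E), D u⟫_𝕜 = μ * ⟪(x : E), u⟫_𝕜 := by
  rw [← hD x u, hx, inner_smul_left, RCLike.conj_ofReal]

/-- Its kernel is `(span {v i | i ∈ s})ᗮ`, presented as a kernel so that closedness and finite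
codimension are immediate. -/
noncomputable def innerCoeffs (v : ι → E) (s : Finset ι) : E →L[𝕜] (s → 𝕜) :=
  ContinuousLinearMap.pi fun i => innerSL 𝕜 (v i)

theorem mem_ker_innerCoeffs {v : ι → E} {s : Finset ι} {u : E} :
    u ∈ (innerCoeffs (𝕜 := 𝕜) v s).ker ↔ ∀ i ∈ s, ⟪v i, u⟫_𝕜 = 0 := by
  simp [innerCoeffs, funext_iff]

theorem isClosed_ker_innerCoeffs (v : ι → E) (s : Finset ι) :
    IsClosed ((innerCoeffs (𝕜 := 𝕜) v s).ker : Set E) :=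
  ContinuousLinearMap.isClosed_ker _

instance (v : ι → E) (s : Finset ι) :
    FiniteDimensional 𝕜 (E ⧸ (innerCoeffs (𝕜 := 𝕜) v s).ker) :=
  Module.Finite.equiv (innerCoeffs (𝕜 := 𝕜) v s).toLinearMap.quotKerEquivRange.symm

theorem finrank_quotient_ker_innerCoeffs_le (v : ι → E) (s : Finset ι) :
    Module.finrank 𝕜 (E ⧸ (innerCoeffs (𝕜 := 𝕜) v s).ker) ≤ s.card := by
  rw [(innerCoeffs (𝕜 := 𝕜) v s).toLinearMap.quotKerEquivRange.finrank_eq]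
  simpa using Submodule.finrank_le (innerCoeffs (𝕜 := 𝕜) v s).toLinearMap.range

namespace HilbertBasis

theorem hasSum_norm_sq_inner (b : HilbertBasis ι 𝕜 E) (x : E) :
    HasSum (fun i => ‖⟪b i, x⟫_𝕜‖ ^ 2) (‖x‖ ^ 2) := by
  have h := lp.hasSum_norm (p := 2) (by norm_num) (b.repr x)
  simpa only [ENNReal.toReal_ofNat, Real.rpow_two, b.repr_apply_apply, b.repr.norm_map] using h

theorem inner_eq_zero_of_mem_span (e : HilbertBasis ι 𝕜 E) {s : Finset ι} {u : E}
    (hu : u ∈ Submodule.span 𝕜 (Set.range fun j : s => e j)) {i : ι} (hi : i ∉ s) :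
    ⟪e i, u⟫_𝕜 = 0 := by
  have : Submodule.span 𝕜 (Set.range fun j : s => e j) ≤ (𝕜 ∙ e i)ᗮ := by
    rw [Submodule.span_le]
    rintro _ ⟨⟨j, hj⟩, rfl⟩
    exact Submodule.mem_orthogonal_singleton_iff_inner_right.mpr
      (e.orthonormal.2 fun h => hi (h ▸ hj))
  exact Submodule.mem_orthogonal_singleton_iff_inner_right.mp (this hu)

variable {D : E →ₗ.[𝕜] E} (hD : D.IsFormalAdjoint D) (e : HilbertBasis ι 𝕜 E)
  (he : ∀ i, e i ∈ D.domain) {μ : ι → ℝ} (hμ : ∀ i, D ⟨e i, he i⟩ = (μ i : 𝕜) • e i)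
include hD hμ

theorem inner_apply_eq_mul_inner (u : D.domain) (i : ι) :
    ⟪e i, D u⟫_𝕜 = μ i * ⟪e i, u⟫_𝕜 :=
  hD.inner_apply_eq_of_apply_eq_smul (x := ⟨e i, he i⟩) (hμ i) u

theorem hasSum_norm_sq_apply (u : D.domain) :
    HasSum (fun i => μ i ^ 2 * ‖⟪e i, u⟫_𝕜‖ ^ 2) (‖D u‖ ^ 2) := by
  convert e.hasSum_norm_sq_inner (D u) using 2 with i
  rw [e.inner_apply_eq_mul_inner hD he hμ, norm_mul, mul_pow, RCLike.norm_ofReal, sq_abs]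

theorem mul_norm_sq_le_norm_sq_apply {L : ℝ} (u : D.domain)
    (hL : ∀ i, ⟪e i, u⟫_𝕜 ≠ 0 → L ≤ μ i ^ 2) : L * ‖(u : E)‖ ^ 2 ≤ ‖D u‖ ^ 2 := by
  refine hasSum_le (fun i => ?_) ((e.hasSum_norm_sq_inner u).mul_left L)
    (e.hasSum_norm_sq_apply hD he hμ u)
  by_cases hi : ⟪e i, u⟫_𝕜 = 0
  · simp [hi]
  · exact mul_le_mul_of_nonneg_right (hL i hi) (by positivity)

theorem norm_sq_apply_le_mul_norm_sq {L : ℝ} (u : D.domain)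
    (hL : ∀ i, ⟪e i, u⟫_𝕜 ≠ 0 → μ i ^ 2 ≤ L) : ‖D u‖ ^ 2 ≤ L * ‖(u : E)‖ ^ 2 := by
  refine hasSum_le (fun i => ?_) (e.hasSum_norm_sq_apply hD he hμ u)
    ((e.hasSum_norm_sq_inner u).mul_left L)
  by_cases hi : ⟪e i, u⟫_𝕜 = 0
  · simp [hi]
  · exact mul_le_mul_of_nonneg_right (hL i hi) (by positivity)

theorem apply_mem_ker_innerCoeffs (s : Finset ι) (u : D.domain)
    (hu : (u : E) ∈ (innerCoeffs (𝕜 := 𝕜) e s).ker) :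
    D u ∈ (innerCoeffs (𝕜 := 𝕜) e s).ker := by
  rw [mem_ker_innerCoeffs] at hu ⊢
  intro i hi
  rw [e.inner_apply_eq_mul_inner hD he hμ, hu i hi, mul_zero]

theorem norm_le_one_div_sqrt_of_mem_ker_innerCoeffs {s : Finset ι} {L : ℝ} (hL0 : 0 < L)
    (hL : ∀ i ∉ s, L ≤ μ i ^ 2) (u : D.domain) (huZ : (u : E) ∈ (innerCoeffs (𝕜 := 𝕜) e s).ker)
    (hu1 : ‖(u : E)‖ ^ 2 + ‖D u‖ ^ 2 ≤ 1) : ‖(u : E)‖ ≤ 1 / Real.sqrt L := by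
  have hlow := e.mul_norm_sq_le_norm_sq_apply hD he hμ u fun i hi =>
    hL i fun his => hi (mem_ker_innerCoeffs.mp huZ i his)
  rw [le_div_iff₀ (Real.sqrt_pos.mpr hL0)]
  refine (pow_le_one_iff_of_nonneg (by positivity) two_ne_zero).mp ?_
  rw [mul_pow, Real.sq_sqrt hL0.le]
  nlinarith

theorem exists_ne_zero_mem_norm_sq_apply_le (Z : Submodule 𝕜 E) [FiniteDimensional 𝕜 (E ⧸ Z)]
    {s : Finset ι} (hs : Module.finrank 𝕜 (E ⧸ Z) < s.card) {L : ℝ}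
    (hL : ∀ i ∈ s, μ i ^ 2 ≤ L) :
    ∃ u : D.domain, (u : E) ∈ Z ∧ (u : E) ≠ 0 ∧ ‖D u‖ ^ 2 ≤ L * ‖(u : E)‖ ^ 2 := by
  set V := Submodule.span 𝕜 (Set.range fun j : s => e j)
  have hV : Module.finrank 𝕜 V = s.card :=
    (finrank_span_eq_card (e.orthonormal.linearIndependent.comp _ Subtype.val_injective)).trans
      (Fintype.card_coe s)
  have : FiniteDimensional 𝕜 V := FiniteDimensional.span_of_finite 𝕜 (Set.finite_range _)
  obtain ⟨v, hvZ, hv0⟩ := Submodule.ne_bot_iff _ |>.mp <|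
    LinearMap.ker_ne_bot_of_finrank_lt (f := Z.mkQ ∘ₗ V.subtype) (hV ▸ hs)
  have hVD : V ≤ D.domain := Submodule.span_le.mpr <| Set.range_subset_iff.mpr fun j => he j
  refine ⟨⟨v, hVD v.2⟩, (Submodule.Quotient.mk_eq_zero Z).mp hvZ, fun h => hv0 (Subtype.ext h),
    e.norm_sq_apply_le_mul_norm_sq hD he hμ _ fun i hi => hL i ?_⟩
  by_contra his
  exact hi (e.inner_eq_zero_of_mem_span v.2 his)

theorem one_le_sq_mul_one_add_of_norm_le (Z : Submodule 𝕜 E) [FiniteDimensional 𝕜 (E ⧸ Z)]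
    {s : Finset ι} (hs : Module.finrank 𝕜 (E ⧸ Z) < s.card) {L r : ℝ}
    (hL : ∀ i ∈ s, μ i ^ 2 ≤ L)
    (hZ : ∀ u : E, ∀ hu : u ∈ D.domain, u ∈ Z → ‖u‖ ^ 2 + ‖D ⟨u, hu⟩‖ ^ 2 ≤ 1 → ‖u‖ ≤ r) :
    1 ≤ r ^ 2 * (1 + L) := by
  obtain ⟨u, huZ, hu0, hDu⟩ := e.exists_ne_zero_mem_norm_sq_apply_le hD he hμ Z hs hL
  have hsmall := LinearPMap.norm_sq_le_sq_mul_of_norm_le hZ u.2 huZ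
  have hu : 0 < ‖(u : E)‖ ^ 2 := by positivity
  refine le_of_mul_le_mul_right ?_ hu
  calc 1 * ‖(u : E)‖ ^ 2 ≤ r ^ 2 * (‖(u : E)‖ ^ 2 + ‖D u‖ ^ 2) := by linarith
    _ ≤ r ^ 2 * (1 + L) * ‖(u : E)‖ ^ 2 := by nlinarith

end HilbertBasis

end Eigenbasis

end

theorem le_mul_rpow_neg_iff {c a x θ : ℝ} (hx : 0 < x) : c ≤ a * x ^ (-θ) ↔ c * x ^ θ ≤ a := by
  rw [Real.rpow_neg hx.le, ← div_eq_mul_inv, le_div_iff₀ (Real.rpow_pos_of_pos hx θ)]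

theorem exists_le_of_eventually_le_mul_rpow_neg {lam : ℕ → ℝ} {c θ : ℝ} (hθ : 0 < θ)
    (hc : 0 < c) (h : ∀ᶠ k : ℕ in atTop, c ≤ lam k * (k : ℝ) ^ (-θ)) :
    ∃ C : ℝ, 0 < C ∧
      ∀ n : ℕ, 1 ≤ n → ∃ m : ℕ, (n : ℝ) ≤ lam m ∧ (m : ℝ) ≤ C * (n : ℝ) ^ (1 / θ) := by
  obtain ⟨N, hN⟩ := eventually_atTop.mp (h.and (eventually_ge_atTop 1))
  set b := c⁻¹ ^ (1 / θ)
  have hb : 0 < b := by positivity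
  refine ⟨N + 1 + b, by positivity, fun n hn => ?_⟩
  set a := (n : ℝ) ^ (1 / θ)
  have ha : 1 ≤ a := Real.one_le_rpow (by exact_mod_cast hn) (by positivity)
  have hab : (a * b) ^ θ = n / c := by
    rw [← Real.mul_rpow (by positivity) (by positivity), one_div,
      Real.rpow_inv_rpow (by positivity) hθ.ne', div_eq_mul_inv]
  set m := N + ⌈a * b⌉₊
  have hm_ge : a * b ≤ m := (Nat.le_ceil _).trans (by simp [m])
  obtain ⟨hcm, hm1⟩ := hN m (Nat.le_add_right _ _)
  refine ⟨m, ?_, ?_⟩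
  · have hm0 : (0 : ℝ) < m := by exact_mod_cast hm1
    calc (n : ℝ) = c * (a * b) ^ θ := by rw [hab]; field_simp
      _ ≤ c * (m : ℝ) ^ θ := by gcongr
      _ ≤ lam m := (le_mul_rpow_neg_iff hm0).mp hcm
  · have hceil := Nat.ceil_lt_add_one (show 0 ≤ a * b by positivity)
    calc (m : ℝ) ≤ N + 1 + a * b := by push_cast [m]; linarith
      _ ≤ (N + 1 + b) * a := by nlinarith

theorem exists_eventually_le_mul_rpow_neg {lam : ℕ → ℝ} {C₀ B θ : ℝ} (hθ : 0 < θ)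
    (hC₀ : 0 < C₀) (hB : 0 < B)
    (h : ∀ n k : ℕ, 1 ≤ n → C₀ * (n : ℝ) ^ (1 / θ) ≤ k → (n : ℝ) ≤ B * (1 + lam k)) :
    ∃ c : ℝ, 0 < c ∧ ∀ᶠ k : ℕ in atTop, c ≤ lam k * (k : ℝ) ^ (-θ) := by
  set A := C₀⁻¹ ^ θ
  have hA : 0 < A := by positivity
  refine ⟨A / (4 * B), by positivity, ?_⟩
  have hgrow : Tendsto (fun k : ℕ => A * (k : ℝ) ^ θ) atTop atTop :=
    ((tendsto_rpow_atTop hθ).comp tendsto_natCast_atTop_atTop).const_mul_atTop hA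
  filter_upwards [hgrow.eventually_ge_atTop (4 * B), hgrow.eventually_ge_atTop 2,
    eventually_ge_atTop 1] with k hk4B hk2 hk1
  have hk0 : (0 : ℝ) < k := by exact_mod_cast hk1
  set x := A * (k : ℝ) ^ θ
  have hx : x = (k / C₀) ^ θ := by
    rw [div_eq_inv_mul, Real.mul_rpow (by positivity) hk0.le]
  set n := ⌊x⌋₊
  have hn1 : 1 ≤ n := Nat.le_floor (by push_cast; linarith)
  have hnx : (n : ℝ) ≤ x := Nat.floor_le (by positivity)
  have hxn : x < n + 1 := Nat.lt_floor_add_one x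
  have hnk : C₀ * (n : ℝ) ^ (1 / θ) ≤ k := by
    have : (n : ℝ) ^ (1 / θ) ≤ k / C₀ := by
      calc (n : ℝ) ^ (1 / θ) ≤ x ^ (1 / θ) := by gcongr
        _ = k / C₀ := by rw [hx, one_div, Real.rpow_rpow_inv (by positivity) hθ.ne']
    rwa [le_div_iff₀ hC₀, mul_comm] at this
  have hnB := h n k hn1 hnk
  rw [le_mul_rpow_neg_iff hk0, div_mul_eq_mul_div, div_le_iff₀ (by positivity)]
  linarith

theorem exists_eigenvalues_sq_eq_lam_natAbs {H : Type*} [NormedAddCommGroup H]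
    [InnerProductSpace ℂ H] (D : H →ₗ.[ℂ] H) (lam : ℕ → ℝ) (hlam0 : ∀ k, 0 ≤ lam k)
    (e : HilbertBasis ℤ ℂ H) (he : ∀ i : ℤ, e i ∈ D.domain)
    (hpos : ∀ k : ℕ, D ⟨e (k : ℤ), he (k : ℤ)⟩ = (Real.sqrt (lam k) : ℂ) • e (k : ℤ))
    (hneg : ∀ k : ℕ, 1 ≤ k →
      D ⟨e (-(k : ℤ)), he (-(k : ℤ))⟩ = (-(Real.sqrt (lam k)) : ℂ) • e (-(k : ℤ))) :
    ∃ μ : ℤ → ℝ, (∀ i, D ⟨e i, he i⟩ = (μ i : ℂ) • e i) ∧ ∀ i, μ i ^ 2 = lam i.natAbs := by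
  refine ⟨fun i => if 0 ≤ i then √(lam i.natAbs) else -√(lam i.natAbs), fun i => ?_,
    fun i => by dsimp only; split_ifs <;> simp [Real.sq_sqrt (hlam0 _)]⟩
  obtain ⟨k, rfl | rfl⟩ := Int.eq_nat_or_neg i
  · simpa using hpos k
  · rcases Nat.eq_zero_or_pos k with rfl | hk
    · simpa using hpos 0
    · simpa [hk.ne'] using hneg k hk

theorem statement4_general {H : Type*} [NormedAddCommGroup H] [InnerProductSpace ℂ H]
    [CompleteSpace H]
    (D : H →ₗ.[ℂ] H) (hdense : Dense (D.domain : Set H))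
    (hsa : D.adjoint = D)
    (lam : ℕ → ℝ) (hlam0 : ∀ k, 0 ≤ lam k) (hlammono : Monotone lam)
    (e : HilbertBasis ℤ ℂ H)
    (he : ∀ i : ℤ, e i ∈ D.domain)
    (hpos : ∀ k : ℕ, D ⟨e (k : ℤ), he (k : ℤ)⟩ = (Real.sqrt (lam k) : ℂ) • e (k : ℤ))
    (hneg : ∀ k : ℕ, 1 ≤ k →
      D ⟨e (-(k : ℤ)), he (-(k : ℤ))⟩ = (-(Real.sqrt (lam k)) : ℂ) • e (-(k : ℤ)))
    (θ : ℝ) (hθ : 0 < θ) :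
    (∃ c : ℝ, 0 < c ∧ ∀ᶠ k : ℕ in atTop, c ≤ lam k * (k : ℝ) ^ (-θ)) ↔
      ∃ C₀ C₁ : ℝ, 0 < C₀ ∧ 0 < C₁ ∧
        ∀ n : ℕ, 1 ≤ n → ∃ Z : Submodule ℂ H,
          IsClosed (Z : Set H) ∧
          FiniteDimensional ℂ (H ⧸ Z) ∧
          (Module.finrank ℂ (H ⧸ Z) : ℝ) ≤ C₀ * (n : ℝ) ^ (1 / θ) ∧
          (∀ u : H, ∀ hu : u ∈ D.domain, u ∈ Z → D ⟨u, hu⟩ ∈ Z) ∧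
          (∀ u : H, ∀ hu : u ∈ D.domain, u ∈ Z →
            ‖u‖ ^ 2 + ‖D ⟨u, hu⟩‖ ^ 2 ≤ 1 → ‖u‖ ≤ C₁ / Real.sqrt n) := by
  have hD : D.IsFormalAdjoint D := by
    simpa only [hsa] using LinearPMap.adjoint_isFormalAdjoint hdense
  obtain ⟨μ, hμ, hμsq⟩ := exists_eigenvalues_sq_eq_lam_natAbs D lam hlam0 e he hpos hneg
  constructor
  · rintro ⟨c, hc, hgrowth⟩
    obtain ⟨C, hC, hindex⟩ := exists_le_of_eventually_le_mul_rpow_neg hθ hc hgrowth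
    refine ⟨2 * C, 1, by positivity, one_pos, fun n hn => ?_⟩
    obtain ⟨m, hnm, hmC⟩ := hindex n hn
    set s := Finset.Ioo (-(m : ℤ)) m
    have hs : (s.card : ℝ) ≤ 2 * m := by norm_cast; simp only [s, Int.card_Ioo]; omega
    refine ⟨(innerCoeffs e s).ker, isClosed_ker_innerCoeffs _ _, inferInstance,
      (Nat.cast_le.mpr (finrank_quotient_ker_innerCoeffs_le _ _)).trans (by linarith),
      fun u hu => e.apply_mem_ker_innerCoeffs hD he hμ s ⟨u, hu⟩,
      fun u hu => e.norm_le_one_div_sqrt_of_mem_ker_innerCoeffs hD he hμ (by positivity)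
        (fun i hi => hμsq i ▸ hnm.trans (hlammono ?_)) ⟨u, hu⟩⟩
    simp only [s, Finset.mem_Ioo, not_and_or, not_lt] at hi
    omega
  · rintro ⟨C₀, C₁, hC₀, hC₁, hZ⟩
    refine exists_eventually_le_mul_rpow_neg hθ hC₀ (B := C₁ ^ 2) (by positivity)
      fun n k hn hk => ?_
    obtain ⟨Z, -, hZfin, hZrank, -, hZbound⟩ := hZ n hn
    have hcard : Module.finrank ℂ (H ⧸ Z) < (Finset.Icc (0 : ℤ) k).card := by
      rw [Int.card_Icc, sub_zero, Int.toNat_natCast_add_one, Nat.lt_succ_iff]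
      exact_mod_cast hZrank.trans hk
    have key := e.one_le_sq_mul_one_add_of_norm_le hD he hμ Z hcard (L := lam k)
      (fun i hi => hμsq i ▸ hlammono (by simp only [Finset.mem_Icc] at hi; omega)) hZbound
    have hn0 : (0 : ℝ) < n := by exact_mod_cast hn
    rwa [div_pow, Real.sq_sqrt hn0.le, div_mul_eq_mul_div, one_le_div hn0] at key

/-- Let `D` be a self-adjoint densely defined operator on an
infinite-dimensional separable complex Hilbert space, with a Hilbert basis `(eᵢ)_{i∈ℤ}` of
eigenvectors, `D e_k = √λ_k e_k` for `k ≥ 0` and `D e_{-k} = -√λ_k e_{-k}` for `k ≥ 1`,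
where `(λ_k)` is nondecreasing in `[0,∞)`. For `θ > 0`, the condition
`liminf λ_k k^{-θ} > 0` is equivalent to the existence of `C₀, C₁ > 0` and, for each
`n ≥ 1`, of a closed subspace `Z_n` of codimension `≤ C₀ n^{1/θ}`, invariant under `D`,
such that every `u ∈ dom D ∩ Z_n` with `‖u‖² + ‖Du‖² ≤ 1` satisfies `‖u‖ ≤ C₁ n^{-1/2}`. -/
theorem statement4 {H : Type*} [NormedAddCommGroup H] [InnerProductSpace ℂ H]
    [CompleteSpace H] [TopologicalSpace.SeparableSpace H]
    (hinf : ¬ FiniteDimensional ℂ H)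
    (D : H →ₗ.[ℂ] H) (hdense : Dense (D.domain : Set H))
    (hsa : D.adjoint = D)
    (lam : ℕ → ℝ) (hlam0 : ∀ k, 0 ≤ lam k) (hlammono : Monotone lam)
    (e : HilbertBasis ℤ ℂ H)
    (he : ∀ i : ℤ, e i ∈ D.domain)
    (hpos : ∀ k : ℕ, D ⟨e (k : ℤ), he (k : ℤ)⟩ = (Real.sqrt (lam k) : ℂ) • e (k : ℤ))
    (hneg : ∀ k : ℕ, 1 ≤ k →
      D ⟨e (-(k : ℤ)), he (-(k : ℤ))⟩ = (-(Real.sqrt (lam k)) : ℂ) • e (-(k : ℤ)))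
    (θ : ℝ) (hθ : 0 < θ) :
    (∃ c : ℝ, 0 < c ∧ ∀ᶠ k : ℕ in atTop, c ≤ lam k * (k : ℝ) ^ (-θ)) ↔
      ∃ C₀ C₁ : ℝ, 0 < C₀ ∧ 0 < C₁ ∧
        ∀ n : ℕ, 1 ≤ n → ∃ Z : Submodule ℂ H,
          IsClosed (Z : Set H) ∧
          FiniteDimensional ℂ (H ⧸ Z) ∧
          (Module.finrank ℂ (H ⧸ Z) : ℝ) ≤ C₀ * (n : ℝ) ^ (1 / θ) ∧
          (∀ u : H, ∀ hu : u ∈ D.domain, u ∈ Z → D ⟨u, hu⟩ ∈ Z) ∧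
          (∀ u : H, ∀ hu : u ∈ D.domain, u ∈ Z →
            ‖u‖ ^ 2 + ‖D ⟨u, hu⟩‖ ^ 2 ≤ 1 → ‖u‖ ≤ C₁ / Real.sqrt n) :=
  statement4_general D hdense hsa lam hlam0 hlammono e he hpos hneg θ hθ
end

section
/- Let H be a real or complex Hilbert space, let Π : H → H be an orthogonal projection of finite rank p, and let 0 < C < 1. Then every orthonormal family contained in the set { u ∈ H : ‖Πu‖ > C‖u‖ } is finite and has at most p/C² elements. -/
open scoped InnerProductSpace

/-!
For an orthonormal basis `(b_j)` of the range of `Π`, symmetry and idempotence give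
`‖Π u‖² = ∑_j |⟪u, b_j⟫|²`. Summing over finitely many members `v_i` of the family and exchanging
the sums, Bessel's inequality bounds each `∑_i |⟪v_i, b_j⟫|²` by `‖b_j‖² = 1`, so
`∑_i ‖Π v_i‖² ≤ p`. Since each term exceeds `C²`, any finite subfamily has at most `p / C²`
members, which bounds the whole family.
-/

namespace LinearMap

variable {𝕜 H : Type*} [RCLike 𝕜] [NormedAddCommGroup H] [InnerProductSpace 𝕜 H]
  {P : H →ₗ[𝕜] H}

theorem IsSymmetric.sum_sq_norm_inner_eq_sq_norm_apply (hsymm : P.IsSymmetric)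
    (hidem : IsIdempotentElem P) {κ : Type*} [Fintype κ] (b : OrthonormalBasis κ 𝕜 (range P))
    (u : H) : ∑ j, ‖⟪u, (b j : H)⟫_𝕜‖ ^ 2 = ‖P u‖ ^ 2 := by
  have hb : ∀ j, P (b j) = b j := fun j => (IsIdempotentElem.mem_range_iff hidem).mp (b j).2
  calc ∑ j, ‖⟪u, (b j : H)⟫_𝕜‖ ^ 2
      = ∑ j, ‖⟪b j, (⟨P u, mem_range_self P u⟩ : range P)⟫_𝕜‖ ^ 2 := by
        refine Finset.sum_congr rfl fun j _ => ?_
        rw [Submodule.coe_inner, ← hsymm, hb, norm_inner_symm]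
    _ = ‖P u‖ ^ 2 := b.sum_sq_norm_inner_right _

theorem IsSymmetric.sum_sq_norm_apply_orthonormal_le_finrank (hsymm : P.IsSymmetric)
    (hidem : IsIdempotentElem P) [FiniteDimensional 𝕜 (range P)] {ι : Type*} {v : ι → H}
    (hv : Orthonormal 𝕜 v) (s : Finset ι) :
    ∑ i ∈ s, ‖P (v i)‖ ^ 2 ≤ Module.finrank 𝕜 (range P) := by
  let b := stdOrthonormalBasis 𝕜 (range P)
  calc ∑ i ∈ s, ‖P (v i)‖ ^ 2
      = ∑ i ∈ s, ∑ j, ‖⟪v i, (b j : H)⟫_𝕜‖ ^ 2 :=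
        Finset.sum_congr rfl fun i _ => (hsymm.sum_sq_norm_inner_eq_sq_norm_apply hidem b _).symm
    _ = ∑ j, ∑ i ∈ s, ‖⟪v i, (b j : H)⟫_𝕜‖ ^ 2 := Finset.sum_comm
    _ ≤ ∑ j, ‖(b j : H)‖ ^ 2 := Finset.sum_le_sum fun j _ => hv.sum_inner_products_le _
    _ = Module.finrank 𝕜 (range P) := by
        have hb (j) : ‖(b j : H)‖ = 1 := b.norm_eq_one j
        simp [hb]

theorem IsSymmetric.card_le_finrank_div_sq (hsymm : P.IsSymmetric) (hidem : IsIdempotentElem P)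
    [FiniteDimensional 𝕜 (range P)] {ι : Type*} {v : ι → H} (hv : Orthonormal 𝕜 v)
    {C : ℝ} (hC : 0 < C) (hmem : ∀ i, C ≤ ‖P (v i)‖) (s : Finset ι) :
    (s.card : ℝ) ≤ Module.finrank 𝕜 (range P) / C ^ 2 := by
  rw [le_div_iff₀ (by positivity)]
  calc (s.card : ℝ) * C ^ 2 = ∑ _i ∈ s, C ^ 2 := by simp
    _ ≤ ∑ i ∈ s, ‖P (v i)‖ ^ 2 := Finset.sum_le_sum fun i _ => by gcongr; exact hmem i
    _ ≤ Module.finrank 𝕜 (range P) := hsymm.sum_sq_norm_apply_orthonormal_le_finrank hidem hv s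

end LinearMap

theorem statement6_general {𝕜 H : Type*} [RCLike 𝕜] [NormedAddCommGroup H]
    [InnerProductSpace 𝕜 H]
    (P : H →ₗ[𝕜] H) (hidem : P ∘ₗ P = P)
    (hsymm : ∀ u v : H, ⟪P u, v⟫_𝕜 = ⟪u, P v⟫_𝕜)
    (p : ℕ) (hfin : FiniteDimensional 𝕜 (LinearMap.range P))
    (hrank : Module.finrank 𝕜 (LinearMap.range P) = p)
    (C : ℝ) (hC0 : 0 < C)
    {ι : Type*} (v : ι → H) (hv : Orthonormal 𝕜 v)
    (hmem : ∀ i, C * ‖v i‖ < ‖P (v i)‖) :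
    Finite ι ∧ (Nat.card ι : ℝ) ≤ (p : ℝ) / C ^ 2 := by
  have hcard (s : Finset ι) : (s.card : ℝ) ≤ p / C ^ 2 := by
    refine hrank ▸ LinearMap.IsSymmetric.card_le_finrank_div_sq hsymm hidem hv hC0 (fun i => ?_) s
    simpa [hv.1 i] using (hmem i).le
  let := fintypeOfFinsetCardLe ⌊(p : ℝ) / C ^ 2⌋₊ fun s => Nat.le_floor (hcard s)
  exact ⟨inferInstance, by simpa [Nat.card_eq_fintype_card] using hcard Finset.univ⟩

/-- If `Π` is an orthogonal projection of finite rank `p` on a (real or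
complex) Hilbert space `H` and `0 < C < 1`, then every orthonormal family contained in
`{ u : ‖Πu‖ > C‖u‖ }` is finite, with at most `p/C²` elements. -/
theorem statement6 {𝕜 H : Type*} [RCLike 𝕜] [NormedAddCommGroup H]
    [InnerProductSpace 𝕜 H] [CompleteSpace H]
    (P : H →ₗ[𝕜] H) (hidem : P ∘ₗ P = P)
    (hsymm : ∀ u v : H, ⟪P u, v⟫_𝕜 = ⟪u, P v⟫_𝕜)
    (p : ℕ) (hfin : FiniteDimensional 𝕜 (LinearMap.range P))
    (hrank : Module.finrank 𝕜 (LinearMap.range P) = p)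
    (C : ℝ) (hC0 : 0 < C) (hC1 : C < 1)
    {ι : Type*} (v : ι → H) (hv : Orthonormal 𝕜 v)
    (hmem : ∀ i, C * ‖v i‖ < ‖P (v i)‖) :
    Finite ι ∧ (Nat.card ι : ℝ) ≤ (p : ℝ) / C ^ 2 :=
  statement6_general P hidem hsymm p hfin hrank C hC0 v hv hmem
end

section
/- Let H be a separable Hilbert space with a Hilbert basis (e_i)_{i∈ℤ}, let G be a Hilbert space, and let R : H → G be a bounded linear map such that ker R is finite-dimensional of dimension p and such that there is C > 0 with ‖Ru‖ ≥ C‖u‖ for every u ∈ H orthogonal to ker R. Then the set { i ∈ ℤ : ‖R e_i‖ < C/√2 } has at most 2p elements. -/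
open scoped InnerProductSpace

/-!
Let `K = ker R` and `P` the orthogonal projection onto `K`. If `‖R eᵢ‖ < C/√2`, then the component
of `eᵢ` orthogonal to `K` has norm `< 1/√2`, so `‖P eᵢ‖² ≥ 1/2` by Pythagoras. On the other hand,
expanding `‖P eᵢ‖²` in an orthonormal basis `(f_j)` of `K` and applying Bessel's inequality to each
`f_j` shows that `∑ᵢ ‖P eᵢ‖² ≤ dim K = p` over any finite set of indices, so at most `2p` indices
qualify.
-/

namespace Submodule

variable {𝕜 E F : Type*} [RCLike 𝕜] [NormedAddCommGroup E] [InnerProductSpace 𝕜 E]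
  [NormedAddCommGroup F] [InnerProductSpace 𝕜 F]

theorem norm_sq_starProjection_eq_sum {ι : Type*} [Fintype ι] (K : Submodule 𝕜 E)
    [K.HasOrthogonalProjection] (f : OrthonormalBasis ι 𝕜 K) (x : E) :
    ‖K.starProjection x‖ ^ 2 = ∑ j, ‖⟪(f j : E), x⟫_𝕜‖ ^ 2 := by
  rw [K.starProjection_apply, Submodule.norm_coe, ← f.sum_sq_norm_inner_right]
  simp only [inner_orthogonalProjectionOnto_eq_of_mem_left]

theorem sum_norm_sq_starProjection_le_finrank {ι : Type*} {v : ι → E} (hv : Orthonormal 𝕜 v)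
    (K : Submodule 𝕜 E) [FiniteDimensional 𝕜 K] (T : Finset ι) :
    ∑ i ∈ T, ‖K.starProjection (v i)‖ ^ 2 ≤ Module.finrank 𝕜 K := by
  let f := stdOrthonormalBasis 𝕜 K
  have bessel (j : Fin (Module.finrank 𝕜 K)) : ∑ i ∈ T, ‖⟪(f j : E), v i⟫_𝕜‖ ^ 2 ≤ 1 := by
    have hfj : ‖(f j : E)‖ = 1 := f.orthonormal.1 j
    simp_rw [norm_inner_symm (f j : E)]
    simpa [hfj] using hv.sum_inner_products_le (f j : E) (s := T)
  calc ∑ i ∈ T, ‖K.starProjection (v i)‖ ^ 2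
      = ∑ j, ∑ i ∈ T, ‖⟪(f j : E), v i⟫_𝕜‖ ^ 2 := by
        simp_rw [K.norm_sq_starProjection_eq_sum f]
        exact Finset.sum_comm
    _ ≤ ∑ _j : Fin (Module.finrank 𝕜 K), (1 : ℝ) := Finset.sum_le_sum fun j _ => bessel j
    _ = Module.finrank 𝕜 K := by simp

theorem one_half_le_norm_sq_starProjection_ker (f : E →ₗ[𝕜] F)
    [(LinearMap.ker f).HasOrthogonalProjection] {C : ℝ}
    (hlow : ∀ u ∈ (LinearMap.ker f)ᗮ, C * ‖u‖ ≤ ‖f u‖) {x : E} (hx : ‖x‖ = 1)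
    (hfx : ‖f x‖ < C / Real.sqrt 2) :
    1 / 2 ≤ ‖(LinearMap.ker f).starProjection x‖ ^ 2 := by
  set K := LinearMap.ker f
  have hC : 0 < C :=
    (div_pos_iff_of_pos_right (Real.sqrt_pos.2 two_pos)).1 ((norm_nonneg _).trans_lt hfx)
  have hf_perp : f (Kᗮ.starProjection x) = f x := by
    rw [K.starProjection_orthogonal_val, map_sub,
      LinearMap.mem_ker.1 (K.starProjection_apply_mem x), sub_zero]
  have hperp : C * ‖Kᗮ.starProjection x‖ < C / Real.sqrt 2 :=
    (hf_perp ▸ hlow _ (Kᗮ.starProjection_apply_mem x)).trans_lt hfx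
  have hperp_sq : ‖Kᗮ.starProjection x‖ ^ 2 < 1 / 2 := by
    have hlt : ‖Kᗮ.starProjection x‖ < 1 / Real.sqrt 2 := by
      rw [← mul_lt_mul_iff_right₀ hC, mul_one_div]
      exact hperp
    calc ‖Kᗮ.starProjection x‖ ^ 2 < (1 / Real.sqrt 2) ^ 2 :=
          pow_lt_pow_left₀ hlt (norm_nonneg _) two_ne_zero
      _ = 1 / 2 := by rw [div_pow, Real.sq_sqrt zero_le_two, one_pow]
  have hpyth := K.norm_sq_eq_add_norm_sq_starProjection x
  rw [hx] at hpyth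
  linarith

end Submodule

theorem Set.finite_and_mul_ncard_le_of_sum_le {ι : Type*} {s : Set ι} {w : ι → ℝ} {c M : ℝ}
    (hc : 0 < c) (hw : ∀ i ∈ s, c ≤ w i) (hsum : ∀ T : Finset ι, ↑T ⊆ s → ∑ i ∈ T, w i ≤ M) :
    s.Finite ∧ c * s.ncard ≤ M := by
  have hcard (T : Finset ι) (hT : ↑T ⊆ s) : c * T.card ≤ M := by
    calc c * T.card = ∑ _i ∈ T, c := by rw [Finset.sum_const, nsmul_eq_mul, mul_comm]
      _ ≤ ∑ i ∈ T, w i := Finset.sum_le_sum fun i hi => hw i (hT hi)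
      _ ≤ M := hsum T hT
  have hfin : s.Finite := by
    by_contra hinf
    obtain ⟨T, hTs, hTcard⟩ := Set.Infinite.exists_subset_card_eq hinf (⌈M / c⌉₊ + 1)
    have := hcard T hTs
    rw [hTcard, Nat.cast_add_one, ← le_div_iff₀' hc] at this
    linarith [Nat.le_ceil (M / c)]
  refine ⟨hfin, ?_⟩
  simpa [Set.ncard_eq_toFinset_card s hfin] using hcard hfin.toFinset (by simp)

theorem statement7_general {𝕜 H G : Type*} [RCLike 𝕜]
    [NormedAddCommGroup H] [InnerProductSpace 𝕜 H]
    [NormedAddCommGroup G] [InnerProductSpace 𝕜 G]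
    (e : HilbertBasis ℤ 𝕜 H)
    (R : H →L[𝕜] G) (p : ℕ)
    (hker : FiniteDimensional 𝕜 (LinearMap.ker (R : H →ₗ[𝕜] G)))
    (hdim : Module.finrank 𝕜 (LinearMap.ker (R : H →ₗ[𝕜] G)) = p)
    (C : ℝ)
    (hlow : ∀ u : H, (∀ v ∈ LinearMap.ker (R : H →ₗ[𝕜] G), ⟪u, v⟫_𝕜 = 0) → C * ‖u‖ ≤ ‖R u‖) :
    {i : ℤ | ‖R (e i)‖ < C / Real.sqrt 2}.Finite ∧
      {i : ℤ | ‖R (e i)‖ < C / Real.sqrt 2}.ncard ≤ 2 * p := by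
  set K := LinearMap.ker (R : H →ₗ[𝕜] G)
  have hlow' : ∀ u ∈ Kᗮ, C * ‖u‖ ≤ ‖R u‖ := fun u hu => hlow u ((K.mem_orthogonal' u).1 hu)
  obtain ⟨hfin, hcard⟩ := Set.finite_and_mul_ncard_le_of_sum_le
    (s := {i : ℤ | ‖R (e i)‖ < C / Real.sqrt 2}) (one_half_pos (α := ℝ))
    (fun i hi => Submodule.one_half_le_norm_sq_starProjection_ker (R : H →ₗ[𝕜] G) hlow'
      (e.orthonormal.1 i) hi)
    (fun T _ => hdim ▸ Submodule.sum_norm_sq_starProjection_le_finrank e.orthonormal K T)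
  refine ⟨hfin, ?_⟩
  have hcard' : ({i : ℤ | ‖R (e i)‖ < C / Real.sqrt 2}.ncard : ℝ) ≤ 2 * p := by linarith
  exact_mod_cast hcard'

/-- Let `H` be a separable Hilbert space with Hilbert basis `(e_i)_{i∈ℤ}`,
`G` a Hilbert space, and `R : H → G` bounded with finite-dimensional kernel of dimension `p`
and `‖Ru‖ ≥ C‖u‖` for `u ⊥ ker R`. Then `{ i : ‖R eᵢ‖ < C/√2 }` has at most `2p` elements. -/
theorem statement7 {𝕜 H G : Type*} [RCLike 𝕜]
    [NormedAddCommGroup H] [InnerProductSpace 𝕜 H] [CompleteSpace H]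
    [NormedAddCommGroup G] [InnerProductSpace 𝕜 G] [CompleteSpace G]
    (e : HilbertBasis ℤ 𝕜 H)
    (R : H →L[𝕜] G) (p : ℕ)
    (hker : FiniteDimensional 𝕜 (LinearMap.ker (R : H →ₗ[𝕜] G)))
    (hdim : Module.finrank 𝕜 (LinearMap.ker (R : H →ₗ[𝕜] G)) = p)
    (C : ℝ) (hC : 0 < C)
    (hlow : ∀ u : H, (∀ v ∈ LinearMap.ker (R : H →ₗ[𝕜] G), ⟪u, v⟫_𝕜 = 0) → C * ‖u‖ ≤ ‖R u‖) :
    {i : ℤ | ‖R (e i)‖ < C / Real.sqrt 2}.Finite ∧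
      {i : ℤ | ‖R (e i)‖ < C / Real.sqrt 2}.ncard ≤ 2 * p :=
  statement7_general e R p hker hdim C hlow
end

section
/- Let (Eₐ)_{a∈ℕ} and (Fₐ)_{a∈ℕ} be families of Hilbert spaces, and for each a let Tₐ be a densely defined operator from Eₐ to Fₐ. Let E and F be the ℓ²-direct sums of (Eₐ) and (Fₐ), and define the operator T from E to F with domain { u ∈ E : uₐ ∈ dom Tₐ for all a and Σₐ ‖Tₐuₐ‖² < ∞ } by (Tu)ₐ = Tₐuₐ. Then T is densely defined and its adjoint is the ℓ²-sum of the adjoints: dom T* = { v ∈ F : vₐ ∈ dom Tₐ* for all a and Σₐ ‖Tₐ*vₐ‖² < ∞ } and (T*v)ₐ = Tₐ*vₐ for every v ∈ dom T*. -/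
/-!
The vectors `lp.single i x` with `x ∈ dom Tᵢ` lie in `dom T` and are mapped to
`lp.single i (Tᵢ x)`; since they span a dense subspace, `T` is densely defined. Testing
`⟪T* v, ·⟫ = ⟪v, T ·⟫` against them shows `vᵢ ∈ dom Tᵢ*` with `(T* v)ᵢ = Tᵢ* vᵢ`. Conversely, if
`(Tᵢ* vᵢ)ᵢ` is square summable, it is a witness for `v ∈ dom T*`: both inner products are the
sums of the componentwise ones.
-/

open scoped InnerProductSpace

theorem lp.dense_of_single_mem {ι : Type*} [DecidableEq ι] {E : ι → Type*}
    [∀ i, NormedAddCommGroup (E i)] {p : ENNReal} [Fact (1 ≤ p)] (hp : p ≠ ⊤)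
    (S : AddSubgroup (lp E p)) {D : ∀ i, Set (E i)} (hD : ∀ i, Dense (D i))
    (hS : ∀ i, ∀ x ∈ D i, lp.single p i x ∈ S) : Dense (S : Set (lp E p)) := by
  intro f
  have hsingle : ∀ i, lp.single p i (f i) ∈ S.topologicalClosure := fun i =>
    map_mem_closure (lp.isometry_single i).continuous (hD i (f i)) (hS i)
  exact S.isClosed_topologicalClosure.mem_of_tendsto (lp.hasSum_single hp f)
    (Filter.Eventually.of_forall fun s => AddSubgroup.sum_mem _ fun i _ => hsingle i)

namespace LinearPMap

variable {𝕜 ι : Type*} [RCLike 𝕜] {E F : ι → Type*}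
  [∀ i, NormedAddCommGroup (E i)] [∀ i, InnerProductSpace 𝕜 (E i)]
  [∀ i, NormedAddCommGroup (F i)] [∀ i, InnerProductSpace 𝕜 (F i)]

structure IsL2Sum (Ta : ∀ i, E i →ₗ.[𝕜] F i) (T : lp E 2 →ₗ.[𝕜] lp F 2) : Prop where
  mem_domain_iff : ∀ u : lp E 2, u ∈ T.domain ↔
    ∃ h : ∀ i, u i ∈ (Ta i).domain, Memℓp (fun i => Ta i ⟨u i, h i⟩) 2
  apply_apply : ∀ (u : lp E 2) (hu : u ∈ T.domain) (h : ∀ i, u i ∈ (Ta i).domain) (j : ι),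
    T ⟨u, hu⟩ j = Ta j ⟨u j, h j⟩

variable {Ta : ∀ i, E i →ₗ.[𝕜] F i} {T : lp E 2 →ₗ.[𝕜] lp F 2}

theorem IsL2Sum.mem_adjoint_domain_of_memℓp [∀ i, CompleteSpace (E i)] (hT : IsL2Sum Ta T)
    (hD : ∀ i, Dense ((Ta i).domain : Set (E i))) (v : lp F 2) (h : ∀ i, v i ∈ (Ta i)†.domain)
    (hv : Memℓp (fun i => (Ta i)† ⟨v i, h i⟩) 2) : v ∈ T†.domain := by
  refine mem_adjoint_domain_of_exists _ ⟨⟨_, hv⟩, fun u => ?_⟩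
  obtain ⟨hu, -⟩ := (hT.mem_domain_iff u).mp u.2
  rw [lp.inner_eq_tsum, lp.inner_eq_tsum]
  congr 1 with i
  rw [hT.apply_apply u u.2 hu i]
  exact adjoint_isFormalAdjoint (hD i) ⟨v i, h i⟩ ⟨_, hu i⟩

variable [DecidableEq ι]

theorem piSingle_mem_domain {i : ι} (x : (Ta i).domain) (j : ι) :
    Pi.single (M := E) i (x : E i) j ∈ (Ta j).domain := by
  rcases eq_or_ne j i with rfl | hj
  · simp
  · simp [Pi.single_eq_of_ne hj]

theorem apply_piSingle {i : ι} (x : (Ta i).domain) (j : ι)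
    (h : Pi.single (M := E) i (x : E i) j ∈ (Ta j).domain) :
    Ta j ⟨Pi.single (M := E) i (x : E i) j, h⟩ = Pi.single (M := F) i (Ta i x) j := by
  rcases eq_or_ne j i with rfl | hj
  · simp
  · simp only [Pi.single_eq_of_ne hj]
    exact (Ta j).map_zero

theorem IsL2Sum.lpSingle_mem_domain (hT : IsL2Sum Ta T) {i : ι} (x : (Ta i).domain) :
    lp.single 2 i (x : E i) ∈ T.domain := by
  rw [hT.mem_domain_iff]
  refine ⟨piSingle_mem_domain x, ?_⟩
  simp_rw [lp.single_apply, apply_piSingle]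
  exact (lp.single 2 i (Ta i x)).2

theorem IsL2Sum.apply_lpSingle (hT : IsL2Sum Ta T) {i : ι} (x : (Ta i).domain)
    (hx : lp.single 2 i (x : E i) ∈ T.domain) :
    T ⟨lp.single 2 i (x : E i), hx⟩ = lp.single 2 i (Ta i x) := by
  ext j
  rw [hT.apply_apply _ hx (piSingle_mem_domain x) j]
  exact apply_piSingle x j _

theorem IsL2Sum.dense_domain (hT : IsL2Sum Ta T) (hD : ∀ i, Dense ((Ta i).domain : Set (E i))) :
    Dense (T.domain : Set (lp E 2)) :=
  lp.dense_of_single_mem (by norm_num) T.domain.toAddSubgroup hD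
    fun _ x hx => hT.lpSingle_mem_domain ⟨x, hx⟩

variable [∀ i, CompleteSpace (E i)]

theorem IsL2Sum.inner_adjoint_apply_eq (hT : IsL2Sum Ta T)
    (hD : ∀ i, Dense ((Ta i).domain : Set (E i))) (v : T†.domain) {i : ι} (x : (Ta i).domain) :
    ⟪(T† v) i, (x : E i)⟫_𝕜 = ⟪(v : lp F 2) i, Ta i x⟫_𝕜 := by
  have hx := hT.lpSingle_mem_domain x
  have := adjoint_isFormalAdjoint (hT.dense_domain hD) v ⟨_, hx⟩
  rwa [hT.apply_lpSingle x hx, lp.inner_single_right, lp.inner_single_right] at this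

theorem IsL2Sum.apply_mem_adjoint_domain (hT : IsL2Sum Ta T)
    (hD : ∀ i, Dense ((Ta i).domain : Set (E i))) (v : T†.domain) (i : ι) :
    (v : lp F 2) i ∈ (Ta i)†.domain :=
  mem_adjoint_domain_of_exists _ ⟨_, hT.inner_adjoint_apply_eq hD v⟩

theorem IsL2Sum.adjoint_apply_apply (hT : IsL2Sum Ta T)
    (hD : ∀ i, Dense ((Ta i).domain : Set (E i))) (v : T†.domain) (i : ι)
    (h : (v : lp F 2) i ∈ (Ta i)†.domain) :
    (T† v) i = (Ta i)† ⟨(v : lp F 2) i, h⟩ :=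
  (adjoint_apply_eq (hD i) _ (hT.inner_adjoint_apply_eq hD v)).symm

end LinearPMap

theorem statement10_general {𝕜 : Type*} [RCLike 𝕜] {E F : ℕ → Type*}
    [∀ a, NormedAddCommGroup (E a)] [∀ a, InnerProductSpace 𝕜 (E a)]
    [∀ a, CompleteSpace (E a)]
    [∀ a, NormedAddCommGroup (F a)] [∀ a, InnerProductSpace 𝕜 (F a)]
    (Ta : ∀ a : ℕ, E a →ₗ.[𝕜] F a)
    (hdense : ∀ a, Dense ((Ta a).domain : Set (E a)))
    (T : lp E 2 →ₗ.[𝕜] lp F 2)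
    (hdom : ∀ u : lp E 2, u ∈ T.domain ↔
      ∃ h : ∀ a, u a ∈ (Ta a).domain, Memℓp (fun a => Ta a ⟨u a, h a⟩) 2)
    (hval : ∀ (u : lp E 2) (hu : u ∈ T.domain) (h : ∀ a, u a ∈ (Ta a).domain) (a : ℕ),
      (T ⟨u, hu⟩) a = Ta a ⟨u a, h a⟩) :
    Dense (T.domain : Set (lp E 2)) ∧
    (∀ v : lp F 2, v ∈ T.adjoint.domain ↔
      ∃ h : ∀ a, v a ∈ (Ta a).adjoint.domain,
        Memℓp (fun a => (Ta a).adjoint ⟨v a, h a⟩) 2) ∧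
    (∀ (v : lp F 2) (hv : v ∈ T.adjoint.domain)
      (h : ∀ a, v a ∈ (Ta a).adjoint.domain) (a : ℕ),
      (T.adjoint ⟨v, hv⟩) a = (Ta a).adjoint ⟨v a, h a⟩) := by
  have hT : LinearPMap.IsL2Sum Ta T := ⟨hdom, hval⟩
  refine ⟨hT.dense_domain hdense, fun v => ⟨fun hv => ?_, fun ⟨h, hv⟩ => ?_⟩,
    fun v hv h a => hT.adjoint_apply_apply hdense ⟨v, hv⟩ a (h a)⟩
  · refine ⟨hT.apply_mem_adjoint_domain hdense ⟨v, hv⟩, ?_⟩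
    simpa only [← hT.adjoint_apply_apply hdense ⟨v, hv⟩] using lp.memℓp (T.adjoint ⟨v, hv⟩)
  · exact hT.mem_adjoint_domain_of_memℓp hdense v h hv

/-- Let `(Tₐ)` be densely defined operators between Hilbert spaces `Eₐ`,
`Fₐ`, and let `T` be the operator between the `ℓ²`-direct sums with domain
`{ u : uₐ ∈ dom Tₐ ∀a, Σₐ‖Tₐuₐ‖² < ∞ }`, `(Tu)ₐ = Tₐuₐ`. Then `T` is densely defined and
its adjoint is the `ℓ²`-sum of the adjoints: `dom T* = { v : vₐ ∈ dom Tₐ* ∀a,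
Σₐ‖Tₐ*vₐ‖² < ∞ }` and `(T*v)ₐ = Tₐ*vₐ`. -/
theorem statement10 {𝕜 : Type*} [RCLike 𝕜] {E F : ℕ → Type*}
    [∀ a, NormedAddCommGroup (E a)] [∀ a, InnerProductSpace 𝕜 (E a)]
    [∀ a, CompleteSpace (E a)]
    [∀ a, NormedAddCommGroup (F a)] [∀ a, InnerProductSpace 𝕜 (F a)]
    [∀ a, CompleteSpace (F a)]
    (Ta : ∀ a : ℕ, E a →ₗ.[𝕜] F a)
    (hdense : ∀ a, Dense ((Ta a).domain : Set (E a)))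
    (T : lp E 2 →ₗ.[𝕜] lp F 2)
    (hdom : ∀ u : lp E 2, u ∈ T.domain ↔
      ∃ h : ∀ a, u a ∈ (Ta a).domain, Memℓp (fun a => Ta a ⟨u a, h a⟩) 2)
    (hval : ∀ (u : lp E 2) (hu : u ∈ T.domain) (h : ∀ a, u a ∈ (Ta a).domain) (a : ℕ),
      (T ⟨u, hu⟩) a = Ta a ⟨u a, h a⟩) :
    Dense (T.domain : Set (lp E 2)) ∧
    (∀ v : lp F 2, v ∈ T.adjoint.domain ↔
      ∃ h : ∀ a, v a ∈ (Ta a).adjoint.domain,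
        Memℓp (fun a => (Ta a).adjoint ⟨v a, h a⟩) 2) ∧
    (∀ (v : lp F 2) (hv : v ∈ T.adjoint.domain)
      (h : ∀ a, v a ∈ (Ta a).adjoint.domain) (a : ℕ),
      (T.adjoint ⟨v, hv⟩) a = (Ta a).adjoint ⟨v a, h a⟩) :=
  statement10_general Ta hdense T hdom hval
end

section
/- Let θ ≥ 1/2 and let φ : ℝ → ℝ be an even Schwartz function, and set ξ(ρ) = ρ^θ φ(ρ) for ρ > 0. Then there is a sequence (ξ_n) in C_c^∞((0,∞)) such that ξ_n → ξ in L²((0,∞)) and such that, for every pair of real numbers (α, β) for which the function η(ρ) = ξ'(ρ) + αρ^{−1}ξ(ρ) + βρ ξ(ρ) belongs to L²((0,∞)), one has ξ_n' + αρ^{−1}ξ_n + βρ ξ_n → η in L²((0,∞)). -/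
/-!
Cut `ξ` off on a logarithmic scale: `ξₙ = χ_R ξ` with `R = n + 1` and
`χ_R(ρ) = ψ(log ρ / R)`, where `ψ` is a bump equal to `1` on `[-1, 1]` and supported in
`[-2, 2]`. Then `ξₙ - ξ = (χ_R - 1) ξ` and, writing `L = d/dρ + α/ρ + βρ`, the Leibniz rule
gives `Lξₙ - Lξ = χ_R' ξ + (χ_R - 1) Lξ`. Terms `(χ_R - 1) g` with `g ∈ L²` tend to `0` by
dominated convergence. For `χ_R' ξ`, we have `|χ_R'(ρ)| ≤ K / (Rρ)` on `[e^{-2R}, e^{2R}]` and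
zero elsewhere, while `θ ≥ 1/2` gives `ξ(ρ)² ≤ Mρ`; hence
`‖χ_R' ξ‖² ≤ (K²M / R²) ∫ dρ/ρ = 4K²M / R → 0`.
-/

open MeasureTheory Set Filter

/-- A test function: smooth, compactly supported, with support contained in `(0,∞)`. -/
def IsTestOnIoi (φ : ℝ → ℝ) : Prop :=
  ContDiff ℝ (⊤ : ℕ∞) φ ∧ HasCompactSupport φ ∧ tsupport φ ⊆ Set.Ioi 0

open Topology Function

theorem SchwartzMap.exists_one_add_norm_rpow_mul_le {E F : Type*} [NormedAddCommGroup E]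
    [NormedSpace ℝ E] [NormedAddCommGroup F] [NormedSpace ℝ F] (f : SchwartzMap E F) (s : ℝ) :
    ∃ M, ∀ x, (1 + ‖x‖) ^ s * ‖f x‖ ≤ M := by
  refine ⟨2 ^ ⌈s⌉₊ * (Finset.Iic (⌈s⌉₊, 0)).sup
    (fun m => SchwartzMap.seminorm ℝ m.1 m.2) f, fun x => ?_⟩
  have hx : 1 ≤ 1 + ‖x‖ := le_add_of_nonneg_right (norm_nonneg x)
  calc (1 + ‖x‖) ^ s * ‖f x‖ ≤ (1 + ‖x‖) ^ (⌈s⌉₊ : ℝ) * ‖f x‖ :=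
        mul_le_mul_of_nonneg_right (Real.rpow_le_rpow_of_exponent_le hx (Nat.le_ceil s))
          (norm_nonneg _)
    _ ≤ _ := by
        simpa [Real.rpow_natCast] using
          one_add_le_sup_seminorm_apply (𝕜 := ℝ) (m := (⌈s⌉₊, 0)) le_rfl le_rfl f x

theorem ContDiffOn.contDiff_of_tsupport_subset {E F : Type*} [NormedAddCommGroup E]
    [NormedSpace ℝ E] [NormedAddCommGroup F] [NormedSpace ℝ F] {n : WithTop ℕ∞} {f : E → F}
    {s : Set E} (hf : ContDiffOn ℝ n f s) (hs : IsOpen s) (hsupp : tsupport f ⊆ s) :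
    ContDiff ℝ n f := by
  refine contDiff_iff_contDiffAt.2 fun x => ?_
  by_cases hx : x ∈ s
  · exact hf.contDiffAt (hs.mem_nhds hx)
  · exact contDiffAt_const.congr_of_eventuallyEq
      (notMem_tsupport_iff_eventuallyEq.1 fun h => hx (hsupp h))

theorem IsTestOnIoi.mul {χ f : ℝ → ℝ} (hχ : IsTestOnIoi χ)
    (hf : ContDiffOn ℝ (⊤ : ℕ∞) f (Ioi 0)) : IsTestOnIoi (χ * f) := by
  obtain ⟨hχs, hχc, hχt⟩ := hχ
  have hsupp : tsupport (χ * f) ⊆ Ioi 0 := tsupport_mul_subset_left.trans hχt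
  exact ⟨(hχs.contDiffOn.mul hf).contDiff_of_tsupport_subset isOpen_Ioi hsupp, hχc.mul_right,
    hsupp⟩

theorem IsTestOnIoi.memLp_deriv_mul {χ f : ℝ → ℝ} (hχ : IsTestOnIoi χ) (hf : Continuous f)
    (p : ENNReal) (μ : Measure ℝ) [IsFiniteMeasureOnCompacts μ] :
    MemLp (fun x => deriv χ x * f x) p μ :=
  ((hχ.1.continuous_deriv (by simp)).mul hf).memLp_of_hasCompactSupport hχ.2.1.deriv.mul_right

section SquareIntegrals

variable {α ι : Type*} [MeasurableSpace α] {μ : Measure α} {l : Filter ι}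

theorem MeasureTheory.MemLp.mul_of_abs_le_one {g η : α → ℝ} {p : ENNReal} (hη : MemLp η p μ)
    (hg : AEStronglyMeasurable g μ) (hg_le : ∀ x, |g x| ≤ 1) :
    MemLp (fun x => g x * η x) p μ :=
  hη.of_le (hg.mul hη.1) <| .of_forall fun x => by
    rw [norm_mul]
    exact mul_le_of_le_one_left (norm_nonneg _) (hg_le x)

theorem tendsto_integral_sq_mul_of_eventually_eq_zero [l.IsCountablyGenerated]
    {h : ι → α → ℝ} {η : α → ℝ} (hη : MemLp η 2 μ)
    (hh : ∀ i, AEStronglyMeasurable (h i) μ) (hh_le : ∀ i x, |h i x| ≤ 1)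
    (hlim : ∀ᵐ x ∂μ, ∀ᶠ i in l, h i x = 0) :
    Tendsto (fun i => ∫ x, (h i x * η x) ^ 2 ∂μ) l (𝓝 0) := by
  have hbound : ∀ i x, ‖(h i x * η x) ^ 2‖ ≤ η x ^ 2 := fun i x => by
    rw [Real.norm_eq_abs, abs_of_nonneg (sq_nonneg _), mul_pow]
    exact mul_le_of_le_one_left (sq_nonneg _) (sq_le_one_iff_abs_le_one _ |>.2 (hh_le i x))
  simpa using tendsto_integral_filter_of_dominated_convergence (f := 0) _
    (.of_forall fun i => ((hh i).mul hη.1).pow 2) (.of_forall fun i => .of_forall (hbound i))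
    hη.integrable_sq (hlim.mono fun x hx => tendsto_const_nhds.congr' <| hx.mono fun i hi => by
      simp [hi])

theorem tendsto_integral_sq_add {a b : ι → α → ℝ} (ha : ∀ i, MemLp (a i) 2 μ)
    (hb : ∀ i, MemLp (b i) 2 μ) (ha0 : Tendsto (fun i => ∫ x, a i x ^ 2 ∂μ) l (𝓝 0))
    (hb0 : Tendsto (fun i => ∫ x, b i x ^ 2 ∂μ) l (𝓝 0)) :
    Tendsto (fun i => ∫ x, (a i x + b i x) ^ 2 ∂μ) l (𝓝 0) := by
  have hle : ∀ i, ∫ x, (a i x + b i x) ^ 2 ∂μ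
      ≤ 2 * ∫ x, a i x ^ 2 ∂μ + 2 * ∫ x, b i x ^ 2 ∂μ := fun i => by
    rw [← integral_const_mul, ← integral_const_mul,
      ← integral_add ((ha i).integrable_sq.const_mul 2) ((hb i).integrable_sq.const_mul 2)]
    refine integral_mono_of_nonneg (.of_forall fun x => sq_nonneg _)
      (((ha i).integrable_sq.const_mul 2).add ((hb i).integrable_sq.const_mul 2))
      (.of_forall fun x => ?_)
    nlinarith [sq_nonneg (a i x - b i x)]
  refine squeeze_zero (fun i => integral_nonneg fun x => sq_nonneg _) hle ?_
  simpa using (ha0.const_mul 2).add (hb0.const_mul 2)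

end SquareIntegrals

noncomputable def radialOp (α β : ℝ) (f : ℝ → ℝ) (ρ : ℝ) : ℝ :=
  deriv f ρ + α * ρ⁻¹ * f ρ + β * ρ * f ρ

theorem radialOp_mul_sub {χ f : ℝ → ℝ} {ρ : ℝ} (hχ : DifferentiableAt ℝ χ ρ)
    (hf : DifferentiableAt ℝ f ρ) (α β : ℝ) :
    radialOp α β (χ * f) ρ - radialOp α β f ρ
      = deriv χ ρ * f ρ + (χ ρ - 1) * radialOp α β f ρ := by
  simp only [radialOp, deriv_mul hχ hf, Pi.mul_apply]
  ring

noncomputable def logCutoffBump : ContDiffBump (0 : ℝ) := ⟨1, 2, one_pos, one_lt_two⟩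

-- `Real.log` is even, so the cutoff has to be set to zero by hand on `ρ ≤ 0`.
noncomputable def logCutoff (R ρ : ℝ) : ℝ :=
  if 0 < ρ then logCutoffBump (Real.log ρ / R) else 0

section LogCutoff

variable {R ρ : ℝ}

theorem logCutoff_of_pos (hρ : 0 < ρ) : logCutoff R ρ = logCutoffBump (Real.log ρ / R) :=
  if_pos hρ

theorem abs_logCutoff_sub_one_le : |logCutoff R ρ - 1| ≤ 1 := by
  have h : 0 ≤ logCutoff R ρ ∧ logCutoff R ρ ≤ 1 := by
    unfold logCutoff
    split_ifs
    exacts [⟨logCutoffBump.nonneg, logCutoffBump.le_one⟩, ⟨le_rfl, zero_le_one⟩]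
  rw [abs_le]
  constructor <;> linarith

theorem support_logCutoff_subset (hR : 0 < R) :
    support (logCutoff R) ⊆ Icc (Real.exp (-(2 * R))) (Real.exp (2 * R)) := by
  intro ρ hρ
  have hpos : 0 < ρ := by
    by_contra h
    exact hρ (if_neg h)
  rw [mem_support, logCutoff_of_pos hpos] at hρ
  have hlog : |Real.log ρ / R| < 2 := by
    by_contra h
    exact hρ (logCutoffBump.zero_of_le_dist
      (by simpa [Real.dist_eq, logCutoffBump, abs_div] using h))
  rw [abs_div, abs_of_pos hR, div_lt_iff₀ hR, abs_lt] at hlog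
  exact ⟨(Real.le_log_iff_exp_le hpos).1 (by linarith),
    (Real.log_le_iff_le_exp hpos).1 (by linarith)⟩

theorem tsupport_logCutoff_subset (hR : 0 < R) :
    tsupport (logCutoff R) ⊆ Icc (Real.exp (-(2 * R))) (Real.exp (2 * R)) :=
  closure_minimal (support_logCutoff_subset hR) isClosed_Icc

theorem logCutoff_eventuallyEq (hρ : 0 < ρ) :
    logCutoff R =ᶠ[𝓝 ρ] fun x => logCutoffBump (Real.log x / R) := by
  filter_upwards [Ioi_mem_nhds hρ] with x hx using logCutoff_of_pos hx

theorem isTestOnIoi_logCutoff (hR : 0 < R) : IsTestOnIoi (logCutoff R) := by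
  have hsupp : tsupport (logCutoff R) ⊆ Ioi 0 :=
    (tsupport_logCutoff_subset hR).trans fun x hx => (Real.exp_pos _).trans_le hx.1
  have hsmooth : ContDiffOn ℝ (⊤ : ℕ∞) (logCutoff R) (Ioi 0) := fun ρ hρ =>
    (logCutoffBump.contDiff.contDiffAt.comp ρ
      ((Real.contDiffAt_log.2 (ne_of_gt hρ)).div_const R)).contDiffWithinAt.congr_of_eventuallyEq
      (eventually_nhdsWithin_of_eventually_nhds (logCutoff_eventuallyEq hρ))
      (logCutoff_of_pos hρ)
  exact ⟨hsmooth.contDiff_of_tsupport_subset isOpen_Ioi hsupp,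
    isCompact_Icc.of_isClosed_subset (isClosed_tsupport _) (tsupport_logCutoff_subset hR), hsupp⟩

theorem eventually_logCutoff_eq_one (hρ : 0 < ρ) : ∀ᶠ R in atTop, logCutoff R ρ = 1 := by
  filter_upwards [eventually_ge_atTop |Real.log ρ|, eventually_gt_atTop 0] with R hR hR0
  rw [logCutoff_of_pos hρ]
  refine logCutoffBump.one_of_mem_closedBall ?_
  simpa [Real.dist_eq, logCutoffBump, abs_div, abs_of_pos hR0, div_le_one hR0] using hR

theorem exists_abs_deriv_logCutoff_le :
    ∃ K, ∀ R, 0 < R → ∀ ρ, 0 < ρ → |deriv (logCutoff R) ρ| ≤ K / (R * ρ) := by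
  obtain ⟨K, hK⟩ := logCutoffBump.hasCompactSupport.deriv.exists_bound_of_continuous
    (logCutoffBump.contDiff (n := 1).continuous_deriv le_rfl)
  refine ⟨K, fun R hR ρ hρ => ?_⟩
  have hderiv : HasDerivAt (logCutoff R) (deriv logCutoffBump (Real.log ρ / R) * (ρ⁻¹ / R)) ρ :=
    ((logCutoffBump.contDiff (n := 1).differentiable one_ne_zero _).hasDerivAt.comp ρ
      ((Real.hasDerivAt_log hρ.ne').div_const R)).congr_of_eventuallyEq
      (logCutoff_eventuallyEq hρ)
  rw [hderiv.deriv, abs_mul, abs_of_pos (by positivity : 0 < ρ⁻¹ / R)]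
  calc |deriv logCutoffBump (Real.log ρ / R)| * (ρ⁻¹ / R) ≤ K * (ρ⁻¹ / R) :=
        mul_le_mul_of_nonneg_right (by simpa using hK (Real.log ρ / R)) (by positivity)
    _ = K / (R * ρ) := by field_simp

end LogCutoff

theorem integral_sq_deriv_logCutoff_mul_le {R K M : ℝ} {f : ℝ → ℝ} (hR : 0 < R)
    (hK : ∀ ρ, 0 < ρ → |deriv (logCutoff R) ρ| ≤ K / (R * ρ))
    (hf : ∀ ρ, 0 < ρ → f ρ ^ 2 ≤ M * ρ) :
    ∫ ρ in Ioi 0, (deriv (logCutoff R) ρ * f ρ) ^ 2 ≤ 4 * K ^ 2 * M / R := by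
  set a := Real.exp (-(2 * R))
  set b := Real.exp (2 * R)
  have hab : Icc a b ⊆ Ioi 0 := fun x hx => (Real.exp_pos _).trans_le hx.1
  have hzero : ∀ ρ ∈ Ioi 0 \ Icc a b, (deriv (logCutoff R) ρ * f ρ) ^ 2 = 0 := fun ρ hρ => by
    rw [notMem_support.1 fun h => hρ.2 (tsupport_logCutoff_subset hR (support_deriv_subset h))]
    ring
  have hpointwise : ∀ ρ ∈ Icc a b,
      (deriv (logCutoff R) ρ * f ρ) ^ 2 ≤ K ^ 2 * M / R ^ 2 * ρ⁻¹ := fun ρ hρ => by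
    have hρ0 : 0 < ρ := hab hρ
    calc (deriv (logCutoff R) ρ * f ρ) ^ 2 = deriv (logCutoff R) ρ ^ 2 * f ρ ^ 2 := mul_pow ..
      _ ≤ (K / (R * ρ)) ^ 2 * (M * ρ) := by
          refine mul_le_mul ?_ (hf ρ hρ0) (sq_nonneg _) (sq_nonneg _)
          simpa only [sq_abs] using pow_le_pow_left₀ (abs_nonneg _) (hK ρ hρ0) 2
      _ = K ^ 2 * M / R ^ 2 * ρ⁻¹ := by field_simp
  rw [setIntegral_eq_of_subset_of_forall_sdiff_eq_zero measurableSet_Ioi hab hzero]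
  calc ∫ ρ in Icc a b, (deriv (logCutoff R) ρ * f ρ) ^ 2
      ≤ ∫ ρ in Icc a b, K ^ 2 * M / R ^ 2 * ρ⁻¹ :=
        integral_mono_of_nonneg (.of_forall fun _ => sq_nonneg _)
          ((continuousOn_inv₀.mono fun x hx => (hab hx).ne').integrableOn_Icc.const_mul _)
          ((ae_restrict_iff' measurableSet_Icc).2 (.of_forall hpointwise))
    _ = K ^ 2 * M / R ^ 2 * (4 * R) := by
        rw [integral_const_mul, integral_Icc_eq_integral_Ioc,
          ← intervalIntegral.integral_of_le (Real.exp_le_exp.2 (by linarith)),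
          integral_inv_of_pos (Real.exp_pos _) (Real.exp_pos _), ← Real.exp_sub, Real.log_exp]
        ring
    _ = 4 * K ^ 2 * M / R := by field_simp

theorem tendsto_integral_sq_deriv_logCutoff_mul {M : ℝ} {f : ℝ → ℝ}
    (hf : ∀ ρ, 0 < ρ → f ρ ^ 2 ≤ M * ρ) :
    Tendsto (fun R => ∫ ρ in Ioi 0, (deriv (logCutoff R) ρ * f ρ) ^ 2) atTop (𝓝 0) := by
  obtain ⟨K, hK⟩ := exists_abs_deriv_logCutoff_le
  refine squeeze_zero' (.of_forall fun R => integral_nonneg fun _ => sq_nonneg _)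
    ((eventually_gt_atTop 0).mono fun R hR => integral_sq_deriv_logCutoff_mul_le hR (hK R hR) hf)
    ?_
  exact tendsto_const_nhds.div_atTop tendsto_id

section RpowMulSchwartz

variable {θ : ℝ} (φ : SchwartzMap ℝ ℝ)

theorem exists_sq_rpow_mul_schwartz_le (hθ : 1 / 2 ≤ θ) :
    ∃ M, ∀ ρ, 0 < ρ → (ρ ^ θ * φ ρ) ^ 2 ≤ M * ρ := by
  obtain ⟨M, hM⟩ := φ.exists_one_add_norm_rpow_mul_le (θ - 1 / 2)
  refine ⟨M ^ 2, fun ρ hρ => ?_⟩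
  have hweighted : |ρ ^ (θ - 1 / 2) * φ ρ| ≤ M := by
    rw [abs_mul, abs_of_nonneg (Real.rpow_nonneg hρ.le _)]
    refine le_trans ?_ (hM ρ)
    rw [Real.norm_eq_abs, Real.norm_eq_abs, abs_of_pos hρ]
    exact mul_le_mul_of_nonneg_right
      (Real.rpow_le_rpow hρ.le (by linarith) (by linarith)) (abs_nonneg _)
  have hsplit : (ρ ^ θ * φ ρ) ^ 2 = ρ * (ρ ^ (θ - 1 / 2) * φ ρ) ^ 2 := by
    rw [show θ = 1 / 2 + (θ - 1 / 2) by ring, Real.rpow_add hρ, ← Real.sqrt_eq_rpow]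
    ring_nf
    rw [Real.sq_sqrt hρ.le]
    ring
  rw [hsplit, mul_comm (M ^ 2)]
  exact mul_le_mul_of_nonneg_left (sq_le_sq' (abs_le.1 hweighted).1 (abs_le.1 hweighted).2) hρ.le

theorem memLp_rpow_mul_schwartz (hθ : 0 ≤ θ) :
    MemLp (fun x => x ^ θ * φ x) 2 (volume.restrict (Ioi 0)) := by
  obtain ⟨M, hM⟩ := φ.exists_one_add_norm_rpow_mul_le (θ + 1)
  have hmeas : AEStronglyMeasurable (fun x : ℝ => x ^ θ * φ x) (volume.restrict (Ioi 0)) :=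
    ((measurable_id.pow_const θ).mul φ.continuous.measurable).aestronglyMeasurable
  refine (memLp_two_iff_integrable_sq hmeas).2 <|
    ((integrable_one_add_norm (E := ℝ) (r := 2) (by norm_num)).const_mul (M ^ 2)).restrict.mono'
      (hmeas.pow 2) ((ae_restrict_iff' measurableSet_Ioi).2 (.of_forall fun ρ hρ => ?_))
  have hρ : 0 < ρ := hρ
  have hdecay : |ρ ^ θ * φ ρ| * (1 + ρ) ≤ M := by
    refine le_trans ?_ (hM ρ)
    rw [Real.norm_eq_abs, Real.norm_eq_abs, abs_of_pos hρ, abs_mul,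
      abs_of_nonneg (Real.rpow_nonneg hρ.le _), Real.rpow_add_one (by positivity)]
    have hpow : ρ ^ θ ≤ (1 + ρ) ^ θ := Real.rpow_le_rpow hρ.le (by linarith) hθ
    have hφ := abs_nonneg (φ ρ)
    nlinarith [mul_le_mul_of_nonneg_right hpow hφ]
  have hbound : |ρ ^ θ * φ ρ| ≤ M / (1 + ρ) := (le_div_iff₀ (by positivity)).2 hdecay
  rw [Real.norm_eq_abs, abs_of_nonneg (sq_nonneg _), Real.norm_eq_abs, abs_of_pos hρ,
    Real.rpow_neg (by positivity), Real.rpow_two, ← sq_abs, ← div_eq_mul_inv, ← div_pow]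
  exact pow_le_pow_left₀ (abs_nonneg _) hbound 2

end RpowMulSchwartz

theorem statement11_general (θ : ℝ) (hθ : 1/2 ≤ θ) (φ : SchwartzMap ℝ ℝ) :
    ∃ ξn : ℕ → ℝ → ℝ, (∀ n, IsTestOnIoi (ξn n)) ∧
      Tendsto (fun n => ∫ ρ in Set.Ioi (0:ℝ),
          (ξn n ρ - ρ ^ θ * φ ρ) ^ 2) atTop (nhds 0) ∧
      ∀ α β : ℝ,
        MemLp (fun ρ : ℝ => deriv (fun x : ℝ => x ^ θ * φ x) ρ
            + α * ρ⁻¹ * (ρ ^ θ * φ ρ) + β * ρ * (ρ ^ θ * φ ρ)) 2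
          (volume.restrict (Set.Ioi 0)) →
        Tendsto (fun n => ∫ ρ in Set.Ioi (0:ℝ),
            (deriv (ξn n) ρ + α * ρ⁻¹ * ξn n ρ + β * ρ * ξn n ρ
              - (deriv (fun x : ℝ => x ^ θ * φ x) ρ
                + α * ρ⁻¹ * (ρ ^ θ * φ ρ) + β * ρ * (ρ ^ θ * φ ρ))) ^ 2)
          atTop (nhds 0) := by
  set ξ : ℝ → ℝ := fun x => x ^ θ * φ x
  set χ : ℕ → ℝ → ℝ := fun n => logCutoff ((n : ℝ) + 1)
  have hχ (n : ℕ) : IsTestOnIoi (χ n) := isTestOnIoi_logCutoff (by positivity)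
  have hξ : Continuous ξ := (Real.continuous_rpow_const (by linarith)).mul φ.continuous
  have hξ_smooth : ContDiffOn ℝ (⊤ : ℕ∞) ξ (Ioi 0) := fun ρ hρ =>
    ((Real.contDiffAt_rpow_const_of_ne (ne_of_gt hρ)).mul
      (φ.smooth ⊤).contDiffAt).contDiffWithinAt
  have hR : Tendsto (fun n : ℕ => (n : ℝ) + 1) atTop atTop :=
    tendsto_atTop_add_const_right _ 1 tendsto_natCast_atTop_atTop
  have hχ_lim : ∀ᵐ ρ ∂volume.restrict (Ioi 0), ∀ᶠ n in atTop, χ n ρ - 1 = 0 :=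
    (ae_restrict_iff' measurableSet_Ioi).2 <| .of_forall fun ρ hρ =>
      (hR.eventually (eventually_logCutoff_eq_one hρ)).mono fun n hn => by simp [χ, hn]
  have hχ_meas (n : ℕ) : AEStronglyMeasurable (fun ρ => χ n ρ - 1) (volume.restrict (Ioi 0)) :=
    ((hχ n).1.continuous.sub continuous_const).aestronglyMeasurable
  refine ⟨fun n => χ n * ξ, fun n => (hχ n).mul hξ_smooth, ?_, fun α β hη => ?_⟩
  · refine (tendsto_integral_sq_mul_of_eventually_eq_zero (memLp_rpow_mul_schwartz φ
      (by linarith)) hχ_meas (fun _ _ => abs_logCutoff_sub_one_le) hχ_lim).congr fun n =>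
      setIntegral_congr_fun measurableSet_Ioi fun ρ _ => ?_
    simp only [Pi.mul_apply]
    ring
  · replace hη : MemLp (radialOp α β ξ) 2 (volume.restrict (Ioi 0)) := hη
    obtain ⟨M, hM⟩ := exists_sq_rpow_mul_schwartz_le φ hθ
    have hleibniz (n : ℕ) : ∫ ρ in Ioi 0, (deriv (χ n) ρ * ξ ρ
        + (χ n ρ - 1) * radialOp α β ξ ρ) ^ 2
        = ∫ ρ in Ioi 0, (radialOp α β (χ n * ξ) ρ - radialOp α β ξ ρ) ^ 2 :=
      setIntegral_congr_fun measurableSet_Ioi fun ρ hρ => by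
        rw [radialOp_mul_sub ((hχ n).1.differentiable (by simp) ρ)
          (hξ_smooth.differentiableOn (by simp) ρ hρ |>.differentiableAt (Ioi_mem_nhds hρ))]
    exact (tendsto_integral_sq_add (fun n => (hχ n).memLp_deriv_mul hξ _ _)
      (fun n => hη.mul_of_abs_le_one (hχ_meas n) fun _ => abs_logCutoff_sub_one_le)
      ((tendsto_integral_sq_deriv_logCutoff_mul hM).comp hR)
      (tendsto_integral_sq_mul_of_eventually_eq_zero hη hχ_meas
        (fun _ _ => abs_logCutoff_sub_one_le) hχ_lim)).congr hleibniz

/-- Let `θ ≥ 1/2`, let `φ` be an even Schwartz function, and set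
`ξ(ρ) = ρ^θ φ(ρ)` for `ρ > 0`. Then there is a sequence `ξₙ ∈ C_c^∞((0,∞))` with
`ξₙ → ξ` in `L²((0,∞))` and such that, for every `(α, β)` for which
`η = ξ' + αρ⁻¹ξ + βρξ` lies in `L²((0,∞))`, also `ξₙ' + αρ⁻¹ξₙ + βρξₙ → η` in `L²((0,∞))`. -/
theorem statement11 (θ : ℝ) (hθ : 1/2 ≤ θ) (φ : SchwartzMap ℝ ℝ)
    (hφ : ∀ x : ℝ, φ (-x) = φ x) :
    ∃ ξn : ℕ → ℝ → ℝ, (∀ n, IsTestOnIoi (ξn n)) ∧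
      Tendsto (fun n => ∫ ρ in Set.Ioi (0:ℝ),
          (ξn n ρ - ρ ^ θ * φ ρ) ^ 2) atTop (nhds 0) ∧
      ∀ α β : ℝ,
        MemLp (fun ρ : ℝ => deriv (fun x : ℝ => x ^ θ * φ x) ρ
            + α * ρ⁻¹ * (ρ ^ θ * φ ρ) + β * ρ * (ρ ^ θ * φ ρ)) 2
          (volume.restrict (Set.Ioi 0)) →
        Tendsto (fun n => ∫ ρ in Set.Ioi (0:ℝ),
            (deriv (ξn n) ρ + α * ρ⁻¹ * ξn n ρ + β * ρ * ξn n ρ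
              - (deriv (fun x : ℝ => x ^ θ * φ x) ρ
                + α * ρ⁻¹ * (ρ ^ θ * φ ρ) + β * ρ * (ρ ^ θ * φ ρ))) ^ 2)
          atTop (nhds 0) :=
  statement11_general θ hθ φ
end
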